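/- arXiv:math/0207018 — 11 statements merged into one kernel-verified Lean document; each statement's English description precedes it below -/
import Mathlib

section
/- For any integer a ≥ 2, the sum over all nontrivial a-th roots of unity ξ of 1/((ξ-1)(ξ̄-1)) equals (a²-1)/12. -/
/-!
For `ξ ≠ 1` with `ξ ^ a = 1` we have `ξ̄ = ξ⁻¹`, and `1 / ((ξ - 1) * (ξ⁻¹ - 1)) = -ξ / (ξ - 1) ^ 2`
has the finite Fourier expansion `∑_{j < a} j (j - a) / (2a) ξ ^ j`, obtained from the closed
forms of `∑ j ξ ^ j` and `∑ j² ξ ^ j`. Summing over the nontrivial roots, where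
`∑_{ξ ≠ 1} ξ ^ j = -1` for `0 < j < a` and the `j = 0` coefficient vanishes, leaves
`-∑_{j < a} j (j - a) / (2a) = (a² - 1) / 12`.
-/

open Finset Polynomial

theorem sub_one_sq_mul_sum_range_natCast_mul_pow {R : Type*} [CommRing R] (x : R) (n : ℕ) :
    (x - 1) ^ 2 * ∑ j ∈ range n, (j : R) * x ^ j = (n - 1) * x ^ (n + 1) - n * x ^ n + x := by
  induction n with
  | zero => simp
  | succ n ih =>
    rw [sum_range_succ, mul_add, ih]
    push_cast
    ring

theorem sub_one_pow_three_mul_sum_range_natCast_sq_mul_pow {R : Type*} [CommRing R] (x : R)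
    (n : ℕ) :
    (x - 1) ^ 3 * ∑ j ∈ range n, (j : R) ^ 2 * x ^ j
      = (n - 1) ^ 2 * x ^ (n + 2) - (2 * n ^ 2 - 2 * n - 1) * x ^ (n + 1) + n ^ 2 * x ^ n
        - x ^ 2 - x := by
  induction n with
  | zero => simp
  | succ n ih =>
    rw [sum_range_succ, mul_add, ih]
    push_cast
    ring

theorem sum_range_natCast_mul_sub_mul_pow_of_pow_eq_one {K : Type*} [Field K] {x : K} {n : ℕ}
    (hx : x ^ n = 1) (hx1 : x ≠ 1) :
    ∑ j ∈ range n, (j : K) * (j - n) * x ^ j = -2 * n * x / (x - 1) ^ 2 := by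
  have hsub : x - 1 ≠ 0 := sub_ne_zero.mpr hx1
  have h1 := sub_one_sq_mul_sum_range_natCast_mul_pow x n
  have h2 := sub_one_pow_three_mul_sum_range_natCast_sq_mul_pow x n
  have hsplit : ∑ j ∈ range n, (j : K) * (j - n) * x ^ j
      = ∑ j ∈ range n, (j : K) ^ 2 * x ^ j - n * ∑ j ∈ range n, (j : K) * x ^ j := by
    rw [mul_sum, ← sum_sub_distrib]
    exact sum_congr rfl fun j _ => by ring
  rw [eq_div_iff (pow_ne_zero 2 hsub), hsplit]
  refine mul_left_cancel₀ hsub ?_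
  simp only [pow_add, hx, one_mul, pow_one] at h1 h2
  linear_combination h2 - n * (x - 1) * h1

theorem one_div_sub_one_mul_inv_sub_one_eq_sum {K : Type*} [Field K] [CharZero K] {x : K} {n : ℕ}
    (hn : n ≠ 0) (hx : x ^ n = 1) (hx1 : x ≠ 1) :
    1 / ((x - 1) * (x⁻¹ - 1)) = ∑ j ∈ range n, (j : K) * (j - n) / (2 * n) * x ^ j := by
  have hx0 : x ≠ 0 := by rintro rfl; simp [hn] at hx
  have hsub : x - 1 ≠ 0 := sub_ne_zero.mpr hx1
  have hn' : (n : K) ≠ 0 := Nat.cast_ne_zero.mpr hn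
  calc 1 / ((x - 1) * (x⁻¹ - 1)) = -2 * n * x / (x - 1) ^ 2 / (2 * n) := by
        field_simp
        ring
    _ = _ := by
        rw [← sum_range_natCast_mul_sub_mul_pow_of_pow_eq_one hx hx1, sum_div]
        exact sum_congr rfl fun j _ => by ring

theorem sum_range_natCast_mul_sub {R : Type*} [CommRing R] (n : ℕ) (m : R) :
    6 * ∑ j ∈ range n, (j : R) * (j - m) = n * (n - 1) * (2 * n - 1 - 3 * m) := by
  induction n with
  | zero => simp
  | succ n ih =>
    rw [sum_range_succ, mul_add, ih]
    push_cast
    ring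

theorem IsPrimitiveRoot.sum_nthRootsFinset_pow_eq_zero {R : Type*} [CommRing R] [IsDomain R]
    {ζ : R} {n j : ℕ} (hζ : IsPrimitiveRoot ζ n) (hj : ¬n ∣ j) :
    ∑ ξ ∈ nthRootsFinset n (1 : R), ξ ^ j = 0 := by
  rcases n.eq_zero_or_pos with rfl | hn
  · simp
  have hζmem : ∀ k, ζ ^ k ∈ nthRootsFinset n (1 : R) := fun k => by
    rw [Polynomial.mem_nthRootsFinset hn, ← pow_mul, mul_comm, pow_mul, hζ.pow_eq_one, one_pow]
  -- multiplication by `ζ` permutes the `n`-th roots of unity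
  have hshift : ∑ ξ ∈ nthRootsFinset n (1 : R), (ζ * ξ) ^ j
      = ∑ ξ ∈ nthRootsFinset n (1 : R), ξ ^ j := by
    refine sum_nbij' (ζ * ·) (ζ ^ (n - 1) * ·) (fun ξ hξ => ?_) (fun ξ hξ => ?_)
      (fun ξ _ => ?_) (fun ξ _ => ?_) (fun _ _ => rfl)
    · simpa using mul_mem_nthRootsFinset (hζmem 1) hξ
    · simpa using mul_mem_nthRootsFinset (hζmem (n - 1)) hξ
    · rw [← mul_assoc, ← pow_succ, Nat.sub_add_cancel hn, hζ.pow_eq_one, one_mul]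
    · rw [← mul_assoc, ← pow_succ', Nat.sub_add_cancel hn, hζ.pow_eq_one, one_mul]
  simp only [mul_pow, ← mul_sum] at hshift
  exact (mul_left_eq_self₀.mp hshift).resolve_left (mt (hζ.pow_eq_one_iff_dvd j).mp hj)

theorem IsPrimitiveRoot.sum_nthRootsFinset_erase_one_pow {R : Type*} [CommRing R] [IsDomain R]
    [DecidableEq R] {ζ : R} {n j : ℕ} (hζ : IsPrimitiveRoot ζ n) (hn : 0 < n) (hj : ¬n ∣ j) :
    ∑ ξ ∈ (nthRootsFinset n (1 : R)).erase 1, ξ ^ j = -1 := by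
  rw [sum_erase_eq_sub (one_mem_nthRootsFinset hn), hζ.sum_nthRootsFinset_pow_eq_zero hj,
    one_pow, zero_sub]

theorem sum_inv_roots_of_unity_sq (a : ℕ) (ha : 2 ≤ a) :
    ∑ ξ ∈ (Polynomial.nthRootsFinset a (1 : ℂ)).erase 1,
      1 / ((ξ - 1) * ((starRingEnd ℂ) ξ - 1)) = ((a : ℂ) ^ 2 - 1) / 12 := by
  have ha0 : 0 < a := by omega
  have hζ := Complex.isPrimitiveRoot_exp a ha0.ne'
  have hexpand : ∀ ξ ∈ (nthRootsFinset a (1 : ℂ)).erase 1,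
      1 / ((ξ - 1) * ((starRingEnd ℂ) ξ - 1))
        = ∑ j ∈ range a, (j : ℂ) * (j - a) / (2 * a) * ξ ^ j := by
    intro ξ hξ
    rw [mem_erase, Polynomial.mem_nthRootsFinset ha0] at hξ
    rw [← Complex.inv_eq_conj (Complex.norm_eq_one_of_pow_eq_one hξ.2 ha0.ne')]
    exact one_div_sub_one_mul_inv_sub_one_eq_sum ha0.ne' hξ.2 hξ.1
  have hcollapse : ∀ j ∈ range a,
      ∑ ξ ∈ (nthRootsFinset a (1 : ℂ)).erase 1, (j : ℂ) * (j - a) / (2 * a) * ξ ^ j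
        = -((j : ℂ) * (j - a) / (2 * a)) := by
    intro j hj
    rcases j.eq_zero_or_pos with rfl | hj0
    · simp
    rw [← mul_sum, hζ.sum_nthRootsFinset_erase_one_pow ha0
      (Nat.not_dvd_of_pos_of_lt hj0 (mem_range.mp hj)), mul_neg_one]
  have hsum := sum_range_natCast_mul_sub a (a : ℂ)
  rw [sum_congr rfl hexpand, sum_comm, sum_congr rfl hcollapse, sum_neg_distrib, ← sum_div]
  have haC : (a : ℂ) ≠ 0 := Nat.cast_ne_zero.mpr ha0.ne'
  field_simp
  linear_combination (-2) * hsum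
end

section
/- If (c_1, …, c_r) is an alternating set of integers, then D(c_1,…,c_r) := Σ_{i,j=1}^r c_i c_j min(i,j) − Σ_{i=1}^r i·c_i equals 0. -/
/-!
With the tail sums `T t = ∑_{t ≤ i ≤ r} c i`, summation by parts gives `∑ i c i = ∑ T t` and
`∑ c i c j min(i, j) = ∑ T t ^ 2`, so `D = ∑ T t (T t - 1)`. Every tail of an alternating
sequence is alternating, and read from the right its nonzero entries are `1, -1, 1, -1, …`, so
its sum is `0` or `1`; hence every term vanishes.
-/

open Finset

theorem sum_Icc_sum_filter_le_eq_sum_nsmul {α M : Type*} [AddCommMonoid M] {r : ℕ}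
    (s : Finset α) (k : α → ℕ) (f : α → M) (hk : ∀ x ∈ s, k x ≤ r) :
    ∑ t ∈ Icc 1 r, ∑ x ∈ s with t ≤ k x, f x = ∑ x ∈ s, k x • f x := by
  simp_rw [sum_filter]
  rw [sum_comm]
  refine sum_congr rfl fun x hx => ?_
  have hfilter : {t ∈ Icc 1 r | t ≤ k x} = Icc 1 (k x) := by
    ext t
    simp only [mem_filter, mem_Icc]
    have := hk x hx
    omega
  rw [← sum_filter, sum_const, hfilter, Nat.card_Icc, Nat.add_sub_cancel]

section TailSums

variable {R : Type*} [CommRing R] (r : ℕ) (c : ℕ → R)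

theorem sum_Icc_natCast_mul_eq_sum_tail :
    ∑ i ∈ Icc 1 r, (i : R) * c i = ∑ t ∈ Icc 1 r, ∑ i ∈ Icc 1 r with t ≤ i, c i := by
  have h := sum_Icc_sum_filter_le_eq_sum_nsmul (Icc 1 r) (fun i => i) c
    fun i hi => (mem_Icc.mp hi).2
  simpa [nsmul_eq_mul] using h.symm

theorem sum_Icc_sum_Icc_mul_min_eq_sum_tail_mul_self :
    ∑ i ∈ Icc 1 r, ∑ j ∈ Icc 1 r, c i * c j * ((min i j : ℕ) : R) =
      ∑ t ∈ Icc 1 r, (∑ i ∈ Icc 1 r with t ≤ i, c i) * ∑ i ∈ Icc 1 r with t ≤ i, c i := by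
  have hsq (t : ℕ) : (∑ i ∈ Icc 1 r with t ≤ i, c i) * ∑ i ∈ Icc 1 r with t ≤ i, c i =
      ∑ p ∈ Icc 1 r ×ˢ Icc 1 r with t ≤ min p.1 p.2, c p.1 * c p.2 := by
    simp_rw [le_min_iff]
    rw [filter_product (t ≤ ·) (t ≤ ·), sum_mul_sum, sum_product]
  simp_rw [hsq]
  rw [sum_Icc_sum_filter_le_eq_sum_nsmul _ (fun p => min p.1 p.2) _
    fun p hp => min_le_of_left_le (mem_Icc.mp (mem_product.mp hp).1).2, sum_product]
  simp [nsmul_eq_mul, mul_comm]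

end TailSums

def IsAlternating {α : Type*} [LinearOrder α] (s : Finset α) (c : α → ℤ) : Prop :=
  ∀ i ∈ s, c i ≠ 0 → c i = (-1) ^ #{j ∈ s | i < j ∧ c j ≠ 0}

namespace IsAlternating

variable {α : Type*} [LinearOrder α] {s : Finset α} {c : α → ℤ}

theorem filter_le (h : IsAlternating s c) (t : α) : IsAlternating {i ∈ s | t ≤ i} c := by
  intro i hi hci
  rw [mem_filter] at hi
  rw [filter_filter, h i hi.1 hci]
  congr 2
  refine filter_congr fun j _ => ?_
  constructor
  · exact fun hj => ⟨hi.2.trans hj.1.le, hj⟩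
  · exact And.right

theorem sum_eq_ite_even (h : IsAlternating s c) :
    ∑ i ∈ s, c i = if Even #{j ∈ s | c j ≠ 0} then 0 else 1 := by
  induction s using Finset.induction_on_min with
  | empty => simp
  | insert a s ha ih =>
    have has : a ∉ s := fun h => lt_irrefl a (ha a h)
    have hs : IsAlternating s c := by
      intro i hi hci
      rw [h i (mem_insert_of_mem hi) hci, filter_insert, if_neg fun hai => (ha i hi).not_gt hai.1]
    have htail : {j ∈ insert a s | a < j ∧ c j ≠ 0} = {j ∈ s | c j ≠ 0} := by
      rw [filter_insert, if_neg fun h => lt_irrefl a h.1]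
      exact filter_congr fun j hj => and_iff_right (ha j hj)
    rw [sum_insert has, ih hs, filter_insert]
    by_cases hca : c a = 0
    · simp [hca]
    · rw [if_pos hca, card_insert_of_notMem fun hm => has (mem_filter.mp hm).1,
        h a (mem_insert_self a s) hca, htail]
      rcases Nat.even_or_odd #{j ∈ s | c j ≠ 0} with he | ho
      · simp [he.neg_one_pow, Nat.even_add_one, he]
      · simp [ho.neg_one_pow, Nat.even_add_one, Nat.not_even_iff_odd.mpr ho]

theorem isIdempotentElem_sum (h : IsAlternating s c) : IsIdempotentElem (∑ i ∈ s, c i) := by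
  rw [h.sum_eq_ite_even]
  split_ifs <;> simp [IsIdempotentElem]

end IsAlternating

theorem D_eq_zero_of_alternating_general (r : ℕ) (c : ℕ → ℤ)
    (h2 : ∀ i ∈ Finset.Icc 1 r, c i ≠ 0 →
      c i = (-1) ^ (((Finset.Icc 1 r).filter (fun j => i < j ∧ c j ≠ 0)).card)) :
    (∑ i ∈ Finset.Icc 1 r, ∑ j ∈ Finset.Icc 1 r, c i * c j * (min i j : ℤ)) -
      (∑ i ∈ Finset.Icc 1 r, (i : ℤ) * c i) = 0 := by
  have halt : IsAlternating (Icc 1 r) c := h2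
  simp only [← Nat.cast_min]
  rw [sum_Icc_sum_Icc_mul_min_eq_sum_tail_mul_self, sum_Icc_natCast_mul_eq_sum_tail,
    ← sum_sub_distrib]
  exact sum_eq_zero fun t _ => sub_eq_zero.mpr (halt.filter_le t).isIdempotentElem_sum

/-- `D(c_1,…,c_r) = Σ_{i,j} c_i c_j min(i,j) − Σ_i i c_i` vanishes for alternating sets. -/
theorem D_eq_zero_of_alternating (r : ℕ) (c : ℕ → ℤ)
    (h1 : ∀ i ∈ Finset.Icc 1 r, c i ∈ ({-1, 0, 1} : Set ℤ))
    (h2 : ∀ i ∈ Finset.Icc 1 r, c i ≠ 0 →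
      c i = (-1) ^ (((Finset.Icc 1 r).filter (fun j => i < j ∧ c j ≠ 0)).card)) :
    (∑ i ∈ Finset.Icc 1 r, ∑ j ∈ Finset.Icc 1 r, c i * c j * (min i j : ℤ)) -
      (∑ i ∈ Finset.Icc 1 r, (i : ℤ) * c i) = 0 :=
  D_eq_zero_of_alternating_general r c h2
end

section
/- Let Δ(t) ∈ ℤ[t] be a polynomial with alternating coefficients satisfying Δ(1) = 1, let a ≥ deg Δ be a positive integer, and let A be a complex number with A^a t^a ≠ 1, t^a ≠ 1, A t² ≠ 1 (t a complex variable). Then (1/a) Σ_{ξ^a=1} Δ(ξt)Δ(ξ̄At) / ((1-ξt)(1-ξ̄At)) = (1-A^a t^{2a}) Δ(At²) / ((1-t^a)(1-A^a t^a)(1-At²)). -/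
/-- A polynomial has alternating coefficients: each coefficient lies in {-1,0,1} and
a nonzero coefficient equals `(-1)^(number of nonzero coefficients above it)`. -/
def AlternatingCoeffs (Δ : Polynomial ℤ) : Prop :=
  ∀ i : ℕ, Δ.coeff i ∈ ({-1, 0, 1} : Set ℤ) ∧
    (Δ.coeff i ≠ 0 → Δ.coeff i = (-1) ^ ((Δ.support.filter (fun j => i < j)).card))

/-!
Let `p m = b₀ + ⋯ + bₘ` be the partial sums of the coefficients of `Δ`. Reading the
alternating coefficients from the top, the tail sums are `0` or `1`, so `Δ(1) = 1` forces
`p m ∈ {0, 1}`, and `p m = 1` once `m ≥ deg Δ`. Summation by parts then gives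
`(1 - x^a) Δ(x) = (1 - x) S(x)` with `S(x) = ∑_{m<a} (p m x^m + (1 - p m) x^(a+m))`,
a sum of monomials containing exactly one exponent from each class `{m, a + m}`.
For `ξ^a = 1` both `S(ξ t)` and `S(ξ⁻¹ s)` are polynomials of degree `< a` in `ξ`,
resp. `ξ⁻¹`, so averaging their product over the roots of unity keeps only the diagonal
terms, and since `p m² = p m` these reassemble to `S(t s)`. Taking `s = A t` gives the
identity.
-/

open Polynomial Finset

theorem Finset.sum_neg_one_pow_card_filter_lt (S : Finset ℕ) :
    ∑ i ∈ S, (-1 : ℤ) ^ #{j ∈ S | i < j} = (#S : ℤ) % 2 := by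
  induction S using Finset.induction_on_max with
  | empty => simp
  | insert M S hM ih =>
    have hMS : M ∉ S := fun h => (hM M h).false
    have htop : #{j ∈ insert M S | M < j} = 0 := by
      simpa [filter_eq_empty_iff] using fun j hj => (hM j hj).le
    have hbelow : ∀ i ∈ S, #{j ∈ insert M S | i < j} = #{j ∈ S | i < j} + 1 := by
      intro i hi
      rw [filter_insert, if_pos (hM i hi), card_insert_of_notMem (by simp [hMS])]
    rw [sum_insert hMS, htop, sum_congr rfl fun i hi => by rw [hbelow i hi, pow_succ],
      ← sum_mul, ih, card_insert_of_notMem hMS]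
    push_cast
    omega

def Polynomial.partialCoeffSum {R : Type*} [Semiring R] (f : R[X]) (m : ℕ) : R :=
  ∑ i ∈ range (m + 1), f.coeff i

theorem Polynomial.partialCoeffSum_eq_sum_support {R : Type*} [Semiring R] (f : R[X])
    (m : ℕ) :
    f.partialCoeffSum m = ∑ i ∈ f.support with i ≤ m, f.coeff i := by
  refine (sum_subset (fun i hi => ?_) fun i hi hi' => ?_).symm
  · simp only [mem_filter] at hi
    exact mem_range.2 (by omega)
  · simp_all

theorem AlternatingCoeffs.partialCoeffSum_eq_zero_or_one {Δ : ℤ[X]} (hΔ : AlternatingCoeffs Δ)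
    (h1 : Δ.eval 1 = 1) (m : ℕ) : Δ.partialCoeffSum m = 0 ∨ Δ.partialCoeffSum m = 1 := by
  set S := {i ∈ Δ.support | m < i}
  have htail : ∑ i ∈ S, Δ.coeff i = ∑ i ∈ S, (-1 : ℤ) ^ #{j ∈ S | i < j} := by
    refine sum_congr rfl fun i hi => ?_
    rw [mem_filter] at hi
    rw [(hΔ i).2 (mem_support_iff.1 hi.1), filter_filter]
    congr 2
    ext j
    simp only [mem_filter]
    constructor <;> intro h <;> refine ⟨h.1, ?_⟩ <;> omega
  have hsplit : Δ.eval 1 = Δ.partialCoeffSum m + ∑ i ∈ S, Δ.coeff i := by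
    rw [partialCoeffSum_eq_sum_support, eval_eq_sum, Polynomial.sum_def,
      ← sum_filter_not_add_sum_filter _ (m < ·)]
    simp [S, not_lt]
  rw [htail, sum_neg_one_pow_card_filter_lt, h1] at hsplit
  omega

theorem Polynomial.partialCoeffSum_of_natDegree_le {R : Type*} [Semiring R] {f : R[X]} {m : ℕ}
    (h : f.natDegree ≤ m) : f.partialCoeffSum m = f.eval 1 := by
  simp [partialCoeffSum, eval_eq_sum_range' (Nat.lt_succ_of_le h)]

theorem sum_range_succ_mul_pow_eq_one_sub_mul {R : Type*} [CommRing R] (b : ℕ → R) (x : R)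
    (n : ℕ) :
    ∑ i ∈ range (n + 1), b i * x ^ i =
      (1 - x) * ∑ m ∈ range n, (∑ i ∈ range (m + 1), b i) * x ^ m +
        (∑ i ∈ range (n + 1), b i) * x ^ n := by
  induction n with
  | zero => simp
  | succ n ih =>
    rw [sum_range_succ (fun i => b i * x ^ i), ih,
      sum_range_succ (fun m => (∑ i ∈ range (m + 1), b i) * x ^ m), sum_range_succ b (n + 1)]
    ring

def transversalSum {R : Type*} [CommRing R] (a : ℕ) (q : ℕ → R) (x : R) : R :=
  ∑ m ∈ range a, (q m * x ^ m + (1 - q m) * x ^ (a + m))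

theorem one_sub_pow_mul_aeval_eq_transversalSum {K : Type*} [CommRing K] {Δ : ℤ[X]}
    (h1 : Δ.eval 1 = 1) {a : ℕ} (hdeg : Δ.natDegree ≤ a) (x : K) :
    (1 - x ^ a) * aeval x Δ =
      (1 - x) * transversalSum a (fun m => (Δ.partialCoeffSum m : K)) x := by
  set p : ℕ → K := fun m => (Δ.partialCoeffSum m : K)
  have hexpand : aeval x Δ = (1 - x) * ∑ m ∈ range a, p m * x ^ m + x ^ a := by
    have hp : ∀ m, ∑ i ∈ range (m + 1), (Δ.coeff i : K) = p m := fun m => by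
      simp [p, partialCoeffSum]
    rw [aeval_eq_sum_range' (Nat.lt_succ_of_le hdeg)]
    simp only [zsmul_eq_mul]
    rw [sum_range_succ_mul_pow_eq_one_sub_mul]
    simp only [hp]
    simp [p, partialCoeffSum_of_natDegree_le hdeg, h1]
  have hsplit : transversalSum a p x =
      ∑ m ∈ range a, p m * x ^ m + x ^ a * ∑ m ∈ range a, x ^ m -
        x ^ a * ∑ m ∈ range a, p m * x ^ m := by
    simp only [transversalSum, mul_sum, ← sum_add_distrib, ← sum_sub_distrib]
    exact sum_congr rfl fun m _ => by ring
  rw [hexpand, hsplit]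
  linear_combination (-x ^ a) * mul_neg_geom_sum x a

theorem transversalSum_mul_of_pow_eq_one {R : Type*} [CommRing R] {a : ℕ} (q : ℕ → R) {ξ : R}
    (hξ : ξ ^ a = 1) (s : R) :
    transversalSum a q (ξ * s) =
      ∑ m ∈ range a, ξ ^ m * (q m * s ^ m + (1 - q m) * s ^ (a + m)) :=
  sum_congr rfl fun m _ => by rw [mul_pow, mul_pow, pow_add ξ, hξ]; ring

section Roots

variable {K : Type*} [Field K] {a : ℕ} {ζ : K}

theorem IsPrimitiveRoot.sum_nthRootsFinset_eq_zero (hζ : IsPrimitiveRoot ζ a) {f : K → K}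
    {c : K} (hc : c ≠ 1) (hf : ∀ ξ, f (ζ * ξ) = c * f ξ) :
    ∑ ξ ∈ nthRootsFinset a (1 : K), f ξ = 0 := by
  rcases a.eq_zero_or_pos with rfl | ha
  · simp
  have hζ0 : ζ ≠ 0 := hζ.ne_zero ha.ne'
  have hshift : ∑ ξ ∈ nthRootsFinset a (1 : K), f (ζ * ξ) =
      ∑ ξ ∈ nthRootsFinset a (1 : K), f ξ := by
    refine sum_nbij' (ζ * ·) (ζ⁻¹ * ·) (fun ξ hξ => ?_) (fun ξ hξ => ?_) (fun ξ _ => ?_)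
      (fun ξ _ => ?_) (fun _ _ => rfl)
    · simpa using mul_mem_nthRootsFinset (hζ.mem_nthRootsFinset ha) hξ
    · simpa using mul_mem_nthRootsFinset (hζ.inv.mem_nthRootsFinset ha) hξ
    · simp [hζ0]
    · simp [hζ0]
  simp only [hf, ← mul_sum] at hshift
  exact (mul_left_eq_self₀.1 hshift).resolve_left hc

theorem IsPrimitiveRoot.sum_nthRootsFinset_pow_mul_inv_pow (hζ : IsPrimitiveRoot ζ a) {i j : ℕ}
    (hi : i < a) (hj : j < a) :
    ∑ ξ ∈ nthRootsFinset a (1 : K), ξ ^ i * ξ⁻¹ ^ j = if i = j then (a : K) else 0 := by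
  split_ifs with hij
  · subst hij
    have hone : ∀ ξ ∈ nthRootsFinset a (1 : K), ξ ^ i * ξ⁻¹ ^ i = 1 := fun ξ hξ => by
      rw [← mul_pow, mul_inv_cancel₀ (ne_zero_of_mem_nthRootsFinset one_ne_zero hξ), one_pow]
    rw [sum_congr rfl hone, sum_const, hζ.card_nthRootsFinset, nsmul_one]
  · have hζ0 : ζ ≠ 0 := hζ.ne_zero (by omega)
    refine hζ.sum_nthRootsFinset_eq_zero (c := ζ ^ i * ζ⁻¹ ^ j) (fun h => hij ?_) fun ξ => ?_
    · refine hζ.pow_inj hi hj ?_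
      rwa [inv_pow, mul_inv_eq_one₀ (pow_ne_zero _ hζ0)] at h
    · rw [mul_inv, mul_pow, mul_pow]
      ring

theorem IsPrimitiveRoot.sum_nthRootsFinset_mul_inv (hζ : IsPrimitiveRoot ζ a) (u v : ℕ → K) :
    ∑ ξ ∈ nthRootsFinset a (1 : K),
        (∑ i ∈ range a, ξ ^ i * u i) * (∑ j ∈ range a, ξ⁻¹ ^ j * v j) =
      a * ∑ i ∈ range a, u i * v i := by
  calc _ = ∑ i ∈ range a, ∑ j ∈ range a,
          (∑ ξ ∈ nthRootsFinset a (1 : K), ξ ^ i * ξ⁻¹ ^ j) * (u i * v j) := by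
        simp_rw [sum_mul_sum, sum_mul]
        exact sum_comm.trans <| sum_congr rfl fun i _ => sum_comm.trans <|
          sum_congr rfl fun j _ => sum_congr rfl fun ξ _ => by ring
    _ = ∑ i ∈ range a, a * (u i * v i) := by
        refine sum_congr rfl fun i hi => ?_
        rw [sum_congr rfl fun j hj => by
          rw [hζ.sum_nthRootsFinset_pow_mul_inv_pow (mem_range.1 hi) (mem_range.1 hj)]]
        simp [hi]
    _ = _ := (mul_sum ..).symm

theorem IsPrimitiveRoot.sum_transversalSum_mul (hζ : IsPrimitiveRoot ζ a) {q : ℕ → K}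
    (hq : ∀ m, q m * q m = q m) (s t : K) :
    ∑ ξ ∈ nthRootsFinset a (1 : K),
        transversalSum a q (ξ * s) * transversalSum a q (ξ⁻¹ * t) =
      a * transversalSum a q (s * t) := by
  rcases a.eq_zero_or_pos with rfl | ha
  · simp
  have hsplit : ∀ ξ ∈ nthRootsFinset a (1 : K),
      transversalSum a q (ξ * s) * transversalSum a q (ξ⁻¹ * t) =
        (∑ i ∈ range a, ξ ^ i * (q i * s ^ i + (1 - q i) * s ^ (a + i))) *
          ∑ j ∈ range a, ξ⁻¹ ^ j * (q j * t ^ j + (1 - q j) * t ^ (a + j)) := by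
    intro ξ hξ
    have hξa : ξ ^ a = 1 := (Polynomial.mem_nthRootsFinset ha 1).1 hξ
    rw [transversalSum_mul_of_pow_eq_one q hξa,
      transversalSum_mul_of_pow_eq_one q (by simp [hξa])]
  rw [sum_congr rfl hsplit, hζ.sum_nthRootsFinset_mul_inv]
  congr 1
  refine sum_congr rfl fun m _ => ?_
  linear_combination (s ^ m - s ^ (a + m)) * (t ^ m - t ^ (a + m)) * hq m

end Roots

/-- Algebraic Lemma (a). -/
theorem algebraic_lemma_a (Δ : Polynomial ℤ) (hΔ : AlternatingCoeffs Δ)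
    (h1 : Δ.eval 1 = 1) (a : ℕ) (ha : 0 < a) (hdeg : Δ.natDegree ≤ a)
    (t A : ℂ) (ht : t ^ a ≠ 1) (hAt : A ^ a * t ^ a ≠ 1) (hAt2 : A * t ^ 2 ≠ 1) :
    (1 / (a : ℂ)) * ∑ ξ ∈ Polynomial.nthRootsFinset a (1 : ℂ),
        (Polynomial.aeval (ξ * t) Δ) * (Polynomial.aeval (ξ⁻¹ * A * t) Δ) /
          ((1 - ξ * t) * (1 - ξ⁻¹ * A * t))
      = (1 - A ^ a * t ^ (2 * a)) * (Polynomial.aeval (A * t ^ 2) Δ) /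
          ((1 - t ^ a) * (1 - A ^ a * t ^ a) * (1 - A * t ^ 2)) := by
  set q : ℕ → ℂ := fun m => (Δ.partialCoeffSum m : ℂ)
  have hq : ∀ m, q m * q m = q m := fun m => by
    rcases hΔ.partialCoeffSum_eq_zero_or_one h1 m with h | h <;> simp [q, h]
  have hfactor : ∀ x : ℂ, x ^ a ≠ 1 →
      aeval x Δ / (1 - x) = transversalSum a q x / (1 - x ^ a) := fun x hx => by
    have hx1 : x ≠ 1 := by rintro rfl; exact hx (one_pow a)
    rw [div_eq_div_iff (sub_ne_zero.2 hx1.symm) (sub_ne_zero.2 hx.symm)]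
    linear_combination one_sub_pow_mul_aeval_eq_transversalSum h1 hdeg x
  have hsummand : ∀ ξ ∈ nthRootsFinset a (1 : ℂ),
      aeval (ξ * t) Δ * aeval (ξ⁻¹ * A * t) Δ / ((1 - ξ * t) * (1 - ξ⁻¹ * A * t)) =
        transversalSum a q (ξ * t) * transversalSum a q (ξ⁻¹ * (A * t)) /
          ((1 - t ^ a) * (1 - A ^ a * t ^ a)) := fun ξ hξ => by
    have hξa : ξ ^ a = 1 := (Polynomial.mem_nthRootsFinset ha 1).1 hξ
    have hξt : (ξ * t) ^ a = t ^ a := by rw [mul_pow, hξa, one_mul]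
    have hξAt : (ξ⁻¹ * (A * t)) ^ a = A ^ a * t ^ a := by
      rw [mul_pow, inv_pow, hξa, inv_one, one_mul, mul_pow]
    rw [mul_div_mul_comm, mul_div_mul_comm, mul_assoc, hfactor _ (hξt ▸ ht),
      hfactor _ (hξAt ▸ hAt), hξt, hξAt]
  have hS : transversalSum a q (A * t ^ 2) =
      (1 - A ^ a * t ^ (2 * a)) * aeval (A * t ^ 2) Δ / (1 - A * t ^ 2) := by
    rw [eq_div_iff (sub_ne_zero.2 hAt2.symm)]
    linear_combination -(one_sub_pow_mul_aeval_eq_transversalSum h1 hdeg (A * t ^ 2))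
  rw [sum_congr rfl hsummand, ← sum_div,
    (Complex.isPrimitiveRoot_exp a ha.ne').sum_transversalSum_mul hq,
    show t * (A * t) = A * t ^ 2 by ring, hS, one_div, mul_div_assoc,
    inv_mul_cancel_left₀ (Nat.cast_ne_zero.2 ha.ne'), div_div, mul_comm (1 - A * t ^ 2)]
end

section
/- Let Δ(t) ∈ ℤ[t] with alternating coefficients, Δ(1)=1, and integers a ≥ deg Δ, d ≥ 2, k ≥ 1. Then (1/a^{d-1}) Σ over d-tuples (ξ_1,…,ξ_d) of a-th roots of unity with ξ_1⋯ξ_d = 1 of [∏_{i=1}^{d-1} Δ(ξ_i t)/(1-ξ_i t)] · Δ(ξ_d t^k)/(1-ξ_d t^k) equals (1-t^{a(d+k-1)}) Δ(t^{d+k-1}) / ((1-t^a)^{d-1}(1-t^{ak})(1-t^{d+k-1})), as rational functions in t. -/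
open Polynomial Finset

theorem sum_range_succ_mul_pow_eq {R : Type*} [CommRing R] (u : ℕ → R) (x : R) (N : ℕ) :
    ∑ n ∈ range (N + 1), u n * x ^ n
      = (1 - x) * ∑ n ∈ range N, (∑ i ∈ range (n + 1), u i) * x ^ n
        + (∑ i ∈ range (N + 1), u i) * x ^ N := by
  induction N with
  | zero => simp
  | succ N ih =>
    rw [sum_range_succ (fun n => u n * x ^ n), ih,
      sum_range_succ (fun n => (∑ i ∈ range (n + 1), u i) * x ^ n) N, sum_range_succ u (N + 1)]
    ring

theorem geom_sum_of_pow_eq_one {K : Type*} [DivisionRing K] [DecidableEq K] {z : K} {a : ℕ}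
    (hz : z ^ a = 1) :
    ∑ i ∈ range a, z ^ i = if z = 1 then (a : K) else 0 := by
  split_ifs with h
  · simp [h]
  · rw [geom_sum_eq h, hz, sub_self, zero_div]

theorem Fin.prod_univ_eq_prod_filter_lt_pred_mul {M : Type*} [CommMonoid M] {d : ℕ} (hd : 0 < d)
    (f : Fin d → M) :
    ∏ i, f i
      = (∏ i ∈ univ.filter (fun i : Fin d => (i : ℕ) < d - 1), f i) * f ⟨d - 1, by omega⟩ := by
  have : univ.filter (fun i : Fin d => (i : ℕ) < d - 1) = univ.erase ⟨d - 1, by omega⟩ := by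
    ext i
    simp only [mem_filter, mem_univ, true_and, mem_erase, ne_eq, Fin.ext_iff, and_true]
    omega
  rw [this, prod_erase_mul _ _ (mem_univ _)]

theorem Fin.prod_eq_pow_pred_mul {M : Type*} [CommMonoid M] {d : ℕ} (hd : 0 < d)
    {f : Fin d → M} {u v : M} (hf : ∀ i : Fin d, (i : ℕ) < d - 1 → f i = u)
    (hlast : f ⟨d - 1, by omega⟩ = v) : ∏ i, f i = u ^ (d - 1) * v := by
  rw [Fin.prod_univ_eq_prod_filter_lt_pred_mul hd, hlast,
    prod_congr rfl fun i hi => hf i (mem_filter.mp hi).2, Finset.prod_const,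
    Fin.card_filter_val_lt, min_eq_right (Nat.sub_le d 1)]

section RootsOfUnity

variable {K : Type*} [Field K] {a : ℕ} {ζ : K}

theorem IsPrimitiveRoot.sum_nthRootsFinset_one {M : Type*} [AddCommMonoid M]
    (hζ : IsPrimitiveRoot ζ a) (f : K → M) :
    ∑ x ∈ nthRootsFinset a (1 : K), f x = ∑ i ∈ range a, f (ζ ^ i) := by
  classical
  have hinj : Set.InjOn (ζ ^ ·) (range a) := fun i hi j hj h =>
    hζ.pow_inj (mem_range.mp hi) (mem_range.mp hj) h
  have himage : (range a).image (ζ ^ ·) = nthRootsFinset a (1 : K) := by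
    refine eq_of_subset_of_card_le (fun x hx => ?_) ?_
    · obtain ⟨i, hi, rfl⟩ := mem_image.mp hx
      rw [Polynomial.mem_nthRootsFinset (pos_of_gt (mem_range.mp hi)), ← pow_mul, mul_comm,
        pow_mul, hζ.pow_eq_one, one_pow]
    · rw [hζ.card_nthRootsFinset, card_image_of_injOn hinj, card_range]
  rw [← himage, sum_image hinj]

theorem IsPrimitiveRoot.sum_pow_div_pow [DecidableEq K] (hζ : IsPrimitiveRoot ζ a) {r s : ℕ}
    (hr : r < a) (hs : s < a) :
    ∑ x ∈ nthRootsFinset a (1 : K), x ^ r / x ^ s = if r = s then (a : K) else 0 := by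
  have hζ0 : ζ ≠ 0 := hζ.ne_zero (pos_of_gt hs).ne'
  have hz : (ζ ^ r / ζ ^ s) ^ a = 1 := by
    rw [div_pow, ← pow_mul, ← pow_mul, mul_comm r, mul_comm s, pow_mul, pow_mul, hζ.pow_eq_one,
      one_pow, one_pow, div_one]
  have hz1 : ζ ^ r / ζ ^ s = 1 ↔ r = s := by
    rw [div_eq_one_iff_eq (pow_ne_zero _ hζ0)]
    exact ⟨fun h => hζ.pow_inj hr hs h, fun h => h ▸ rfl⟩
  simp_rw [hζ.sum_nthRootsFinset_one, ← pow_mul, mul_comm _ r, mul_comm _ s, pow_mul, ← div_pow,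
    geom_sum_of_pow_eq_one hz, hz1]

theorem IsPrimitiveRoot.mul_sum_prod_of_prod_eq_one {ι : Type*} [Fintype ι] [DecidableEq ι]
    (hζ : IsPrimitiveRoot ζ a) (F : ι → K → K) (G : ι → ℕ → K)
    (hF : ∀ i, ∀ x ∈ nthRootsFinset a (1 : K), F i x = ∑ r ∈ range a, x ^ r * G i r)
    [DecidablePred fun ξ : ι → K => ∏ i, ξ i = 1] :
    a * ∑ ξ ∈ (Fintype.piFinset fun _ => nthRootsFinset a (1 : K)).filter
        (fun ξ => ∏ i, ξ i = 1), ∏ i, F i (ξ i)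
      = a ^ Fintype.card ι * ∑ r ∈ range a, ∏ i, G i r := by
  classical
  have hcoeff : ∀ i, ∀ s ∈ range a,
      ∑ x ∈ nthRootsFinset a (1 : K), F i x / x ^ s = a * G i s := by
    intro i s hs
    calc ∑ x ∈ nthRootsFinset a (1 : K), F i x / x ^ s
        = ∑ r ∈ range a, G i r * ∑ x ∈ nthRootsFinset a (1 : K), x ^ r / x ^ s := by
          simp_rw [mul_sum]
          rw [sum_comm]
          refine sum_congr rfl fun x hx => ?_
          rw [hF i x hx, sum_div]
          exact sum_congr rfl fun r _ => by ring
      _ = a * G i s := by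
          rw [sum_congr rfl fun r hr => by
            rw [hζ.sum_pow_div_pow (mem_range.mp hr) (mem_range.mp hs)]]
          simp [hs, mul_comm]
  have hindicator : ∀ ξ ∈ Fintype.piFinset fun _ : ι => nthRootsFinset a (1 : K),
      ∑ s ∈ range a, ((∏ i, ξ i) ^ s)⁻¹ = if ∏ i, ξ i = 1 then (a : K) else 0 := by
    intro ξ hξ
    have hroot : (∏ i, ξ i)⁻¹ ^ a = 1 := by
      rcases Nat.eq_zero_or_pos a with rfl | ha
      · exact pow_zero _
      rw [inv_pow, ← prod_pow, prod_eq_one fun i _ => (Polynomial.mem_nthRootsFinset ha 1).mp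
        (Fintype.mem_piFinset.mp hξ i), inv_one]
    simp_rw [← inv_pow, geom_sum_of_pow_eq_one hroot, inv_eq_one]
  calc a * ∑ ξ ∈ (Fintype.piFinset fun _ => nthRootsFinset a (1 : K)).filter
        (fun ξ => ∏ i, ξ i = 1), ∏ i, F i (ξ i)
      = ∑ ξ ∈ Fintype.piFinset fun _ => nthRootsFinset a (1 : K),
          ∑ s ∈ range a, ∏ i, F i (ξ i) / ξ i ^ s := by
        rw [sum_filter, mul_sum]
        refine sum_congr rfl fun ξ hξ => ?_
        simp_rw [prod_div_distrib, prod_pow, div_eq_mul_inv, ← mul_sum, hindicator ξ hξ]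
        split_ifs <;> ring
    _ = ∑ s ∈ range a, ∏ i, ∑ x ∈ nthRootsFinset a (1 : K), F i x / x ^ s := by
        rw [sum_comm]
        simp_rw [prod_univ_sum]
    _ = ∑ s ∈ range a, ∏ i, (a * G i s) :=
        sum_congr rfl fun s hs => prod_congr rfl fun i _ => hcoeff i s hs
    _ = a ^ Fintype.card ι * ∑ r ∈ range a, ∏ i, G i r := by
        simp_rw [prod_mul_distrib, prod_const, card_univ, mul_sum]

end RootsOfUnity

def coeffPartialSum (Δ : ℤ[X]) (n : ℕ) : ℤ := ∑ i ∈ range (n + 1), Δ.coeff i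

theorem coeffPartialSum_add_sum_coeff_gt (Δ : ℤ[X]) (n : ℕ) :
    coeffPartialSum Δ n + ∑ j ∈ Δ.support.filter (n < ·), Δ.coeff j = Δ.eval 1 := by
  have hlow : coeffPartialSum Δ n = ∑ j ∈ Δ.support.filter (· ≤ n), Δ.coeff j := by
    refine (sum_subset (fun j hj => ?_) fun j hjn hj => ?_).symm
    · simp only [mem_filter, mem_range] at hj ⊢
      omega
    · simp only [mem_filter, mem_support_iff, mem_range, not_and] at hjn hj
      exact not_not.mp fun h => absurd (hj h) (by omega)
  simp_rw [hlow, ← not_le, sum_filter_add_sum_filter_not, eval_eq_sum, sum_def, one_pow, mul_one]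

section PartialSums

variable {Δ : ℤ[X]}

theorem two_mul_sum_coeff_gt (hΔ : AlternatingCoeffs Δ) (n : ℕ) :
    2 * ∑ j ∈ Δ.support.filter (n < ·), Δ.coeff j = 1 - (-1) ^ #(Δ.support.filter (n < ·)) := by
  induction hm : Δ.natDegree - n generalizing n with
  | zero =>
    have hempty : Δ.support.filter (n < ·) = ∅ :=
      filter_eq_empty_iff.mpr fun j hj => not_lt.mpr ((le_natDegree_of_mem_supp j hj).trans
        (by omega))
    simp [hempty]
  | succ m ih =>
    have hsplit : Δ.support.filter (n < ·)
        = Δ.support.filter (· = n + 1) ∪ Δ.support.filter (n + 1 < ·) := by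
      rw [← filter_or]
      exact filter_congr fun j _ => by omega
    have hdisj : Disjoint (Δ.support.filter (· = n + 1)) (Δ.support.filter (n + 1 < ·)) :=
      disjoint_filter.mpr fun j _ h => by omega
    rw [hsplit, sum_union hdisj, card_union_of_disjoint hdisj, filter_eq', mul_add,
      ih (n + 1) (by omega)]
    by_cases h : n + 1 ∈ Δ.support
    · rw [if_pos h, sum_singleton, card_singleton, (hΔ (n + 1)).2 (mem_support_iff.mp h)]
      ring
    · simp [h]

theorem coeffPartialSum_eq_zero_or_one (hΔ : AlternatingCoeffs Δ) (h1 : Δ.eval 1 = 1) (n : ℕ) :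
    coeffPartialSum Δ n = 0 ∨ coeffPartialSum Δ n = 1 := by
  have hsum := coeffPartialSum_add_sum_coeff_gt Δ n
  have htail := two_mul_sum_coeff_gt hΔ n
  rcases neg_one_pow_eq_or ℤ #(Δ.support.filter (n < ·)) with h | h <;> rw [h] at htail
  · right; omega
  · left; omega

theorem coeffPartialSum_of_natDegree_le {n : ℕ} (hn : Δ.natDegree ≤ n) :
    coeffPartialSum Δ n = Δ.eval 1 := by
  have hempty : Δ.support.filter (n < ·) = ∅ :=
    filter_eq_empty_iff.mpr fun j hj => not_lt.mpr ((le_natDegree_of_mem_supp j hj).trans hn)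
  simpa [hempty] using coeffPartialSum_add_sum_coeff_gt Δ n

theorem aeval_eq_one_sub_mul_sum_add_pow {A : Type*} [CommRing A] {a : ℕ} (h1 : Δ.eval 1 = 1)
    (hdeg : Δ.natDegree ≤ a) (x : A) :
    aeval x Δ = (1 - x) * ∑ r ∈ range a, (coeffPartialSum Δ r : A) * x ^ r + x ^ a := by
  have htop : ∑ i ∈ range (a + 1), (Δ.coeff i : A) = 1 := by
    rw [← Int.cast_sum, ← coeffPartialSum, coeffPartialSum_of_natDegree_le hdeg, h1,
      Int.cast_one]
  rw [aeval_eq_sum_range' (Nat.lt_succ_of_le hdeg)]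
  simp_rw [zsmul_eq_mul, sum_range_succ_mul_pow_eq, htop, one_mul, coeffPartialSum, Int.cast_sum]

end PartialSums

def fourierNumerator {A : Type*} [CommRing A] (Δ : ℤ[X]) (a r : ℕ) (y : A) : A :=
  y ^ r * (coeffPartialSum Δ r * (1 - y ^ a) + y ^ a)

section Expansion

variable {Δ : ℤ[X]} {a : ℕ}

theorem sum_fourierNumerator_eq {A : Type*} [CommRing A] (y : A) :
    ∑ r ∈ range a, fourierNumerator Δ a r y
      = (1 - y ^ a) * ∑ r ∈ range a, (coeffPartialSum Δ r : A) * y ^ r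
        + y ^ a * ∑ r ∈ range a, y ^ r := by
  rw [mul_sum, mul_sum, ← sum_add_distrib]
  exact sum_congr rfl fun r _ => by rw [fourierNumerator]; ring

theorem one_sub_mul_sum_fourierNumerator {A : Type*} [CommRing A] (h1 : Δ.eval 1 = 1)
    (hdeg : Δ.natDegree ≤ a) (y : A) :
    (1 - y) * ∑ r ∈ range a, fourierNumerator Δ a r y = (1 - y ^ a) * aeval y Δ := by
  rw [sum_fourierNumerator_eq, aeval_eq_one_sub_mul_sum_add_pow h1 hdeg]
  linear_combination y ^ a * geom_sum_mul_neg y a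

theorem prod_fourierNumerator {ι A : Type*} [CommRing A] (hΔ : AlternatingCoeffs Δ)
    (h1 : Δ.eval 1 = 1) (r : ℕ) (s : Finset ι) (y : ι → A) :
    ∏ i ∈ s, fourierNumerator Δ a r (y i) = fourierNumerator Δ a r (∏ i ∈ s, y i) := by
  rcases coeffPartialSum_eq_zero_or_one hΔ h1 r with hc | hc <;>
    simp [fourierNumerator, hc, prod_mul_distrib, prod_pow]

theorem aeval_mul_div_one_sub_eq_sum {K : Type*} [Field K] (h1 : Δ.eval 1 = 1)
    (hdeg : Δ.natDegree ≤ a) {ξ y : K} (hξ : ξ ^ a = 1) (hy : y ^ a ≠ 1) :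
    aeval (ξ * y) Δ / (1 - ξ * y)
      = ∑ r ∈ range a, ξ ^ r * (fourierNumerator Δ a r y / (1 - y ^ a)) := by
  have hxa : (ξ * y) ^ a = y ^ a := by rw [mul_pow, hξ, one_mul]
  have hya : 1 - y ^ a ≠ 0 := sub_ne_zero.mpr (Ne.symm hy)
  have hx : 1 - ξ * y ≠ 0 := fun h => hy (by rw [← hxa, ← sub_eq_zero.mp h, one_pow])
  have hsum : ∑ r ∈ range a, ξ ^ r * (fourierNumerator Δ a r y / (1 - y ^ a))
      = (∑ r ∈ range a, fourierNumerator Δ a r (ξ * y)) / (1 - y ^ a) := by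
    rw [sum_div]
    refine sum_congr rfl fun r _ => ?_
    simp only [fourierNumerator, hxa]
    ring
  rw [hsum, div_eq_div_iff hx hya, ← hxa, mul_comm, ← one_sub_mul_sum_fourierNumerator h1 hdeg]
  ring

theorem mul_sum_prod_aeval_div_of_prod_eq_one {K ι : Type*} [Field K] [Fintype ι]
    [DecidableEq ι] (hΔ : AlternatingCoeffs Δ) (h1 : Δ.eval 1 = 1) (ha : 0 < a)
    (hdeg : Δ.natDegree ≤ a) {ζ : K} (hζ : IsPrimitiveRoot ζ a) (y : ι → K)
    (hy : ∀ i, y i ^ a ≠ 1) (hU : ∏ i, y i ≠ 1) [DecidablePred fun ξ : ι → K => ∏ i, ξ i = 1] :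
    a * ∑ ξ ∈ (Fintype.piFinset fun _ => nthRootsFinset a (1 : K)).filter
        (fun ξ => ∏ i, ξ i = 1), ∏ i, aeval (ξ i * y i) Δ / (1 - ξ i * y i)
      = a ^ Fintype.card ι * ((1 - (∏ i, y i) ^ a) * aeval (∏ i, y i) Δ
          / ((∏ i, (1 - y i ^ a)) * (1 - ∏ i, y i))) := by
  rw [hζ.mul_sum_prod_of_prod_eq_one _ (fun i r => fourierNumerator Δ a r (y i) / (1 - y i ^ a))
    fun i x hx => aeval_mul_div_one_sub_eq_sum h1 hdeg ((mem_nthRootsFinset ha 1).mp hx) (hy i)]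
  simp_rw [prod_div_distrib, prod_fourierNumerator hΔ h1, ← sum_div]
  rw [← one_sub_mul_sum_fourierNumerator h1 hdeg, mul_comm (∏ i, (1 - y i ^ a)),
    mul_div_mul_left _ _ (sub_ne_zero.mpr hU.symm)]

end Expansion

open Classical in
/-- Algebraic Lemma (b). -/
theorem algebraic_lemma_b (Δ : Polynomial ℤ) (hΔ : AlternatingCoeffs Δ)
    (h1 : Δ.eval 1 = 1) (a d k : ℕ) (ha : 0 < a) (hdeg : Δ.natDegree ≤ a)
    (hd : 2 ≤ d)
    (t : ℂ) (ht : t ^ a ≠ 1) (htk : t ^ (a * k) ≠ 1) (htd : t ^ (d + k - 1) ≠ 1) :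
    (1 / (a : ℂ) ^ (d - 1)) *
      ∑ ξ ∈ (Fintype.piFinset fun _ : Fin d => Polynomial.nthRootsFinset a (1 : ℂ)).filter
          (fun ξ => ∏ i, ξ i = 1),
        (∏ i ∈ Finset.univ.filter (fun i : Fin d => (i : ℕ) < d - 1),
            Polynomial.aeval (ξ i * t) Δ / (1 - ξ i * t)) *
          (Polynomial.aeval (ξ ⟨d - 1, by omega⟩ * t ^ k) Δ /
            (1 - ξ ⟨d - 1, by omega⟩ * t ^ k))
      = (1 - t ^ (a * (d + k - 1))) * Polynomial.aeval (t ^ (d + k - 1)) Δ /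
          ((1 - t ^ a) ^ (d - 1) * (1 - t ^ (a * k)) * (1 - t ^ (d + k - 1))) := by
  have hd0 : 0 < d := by omega
  obtain ⟨y, hy_def⟩ : ∃ y : Fin d → ℂ, ∀ i, y i = if (i : ℕ) < d - 1 then t else t ^ k :=
    ⟨_, fun _ => rfl⟩
  have hsummand : ∀ ξ : Fin d → ℂ,
      (∏ i ∈ univ.filter (fun i : Fin d => (i : ℕ) < d - 1), aeval (ξ i * t) Δ / (1 - ξ i * t))
          * (aeval (ξ ⟨d - 1, by omega⟩ * t ^ k) Δ / (1 - ξ ⟨d - 1, by omega⟩ * t ^ k))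
        = ∏ i, aeval (ξ i * y i) Δ / (1 - ξ i * y i) := by
    intro ξ
    rw [Fin.prod_univ_eq_prod_filter_lt_pred_mul hd0, hy_def, if_neg (lt_irrefl _)]
    exact congrArg (· * _)
      (prod_congr rfl fun i hi => by rw [hy_def, if_pos (mem_filter.mp hi).2])
  have hy : ∀ i, y i ^ a ≠ 1 := fun i => by
    by_cases hi : (i : ℕ) < d - 1
    · rwa [hy_def, if_pos hi]
    · rwa [hy_def, if_neg hi, ← pow_mul, mul_comm]
  have hprod : ∏ i, y i = t ^ (d + k - 1) := by
    rw [Fin.prod_eq_pow_pred_mul hd0 (fun i hi => by rw [hy_def, if_pos hi])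
      (by rw [hy_def, if_neg (lt_irrefl _)]), ← pow_add]
    congr 1
    omega
  have hden : ∏ i, (1 - y i ^ a) = (1 - t ^ a) ^ (d - 1) * (1 - t ^ (a * k)) :=
    Fin.prod_eq_pow_pred_mul hd0 (fun i hi => by rw [hy_def, if_pos hi])
      (by rw [hy_def, if_neg (lt_irrefl _), ← pow_mul, mul_comm k])
  have key := mul_sum_prod_aeval_div_of_prod_eq_one hΔ h1 ha hdeg
    (Complex.isPrimitiveRoot_exp a ha.ne') y hy (hprod ▸ htd)
  rw [hprod, hden, Fintype.card_fin, ← pow_sub_one_mul hd0.ne'] at key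
  have haC : (a : ℂ) ≠ 0 := Nat.cast_ne_zero.mpr ha.ne'
  simp_rw [hsummand, pow_mul' t a, one_div, inv_mul_eq_iff_eq_mul₀ (pow_ne_zero _ haC)]
  exact mul_left_cancel₀ haC (key.trans (by ring))
end

section
/- Let a and k be integers with 1 ≤ k < a, and A, t complex numbers with t^a ≠ 1. Then (1/a) Σ_{ξ^a=1} (ξ̄ A t)^k/(1-ξt) = A^k t^{2k}/(1-t^a). -/
/-! Since `ξ ^ n = 1`, the geometric series gives `1 / (1 - ξ t) = (∑_{j<n} (ξ t)^j) / (1 - t^n)`,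
so the sum becomes `∑_j t^j ∑_ξ ξ^(j-k)`. Orthogonality of the `n`-th roots of unity,
`∑_ξ ξ^m = n` if `n ∣ m` and `0` otherwise, keeps only the term `j = k`. -/

open Finset Polynomial

theorem inv_one_sub_mul_eq_geom_sum_div {K : Type*} [Field K] {n : ℕ} {ξ t : K} (hξ : ξ ^ n = 1)
    (ht : t ^ n ≠ 1) : (1 - ξ * t)⁻¹ = (∑ j ∈ range n, (ξ * t) ^ j) / (1 - t ^ n) := by
  have hgeom : (1 - ξ * t) * ∑ j ∈ range n, (ξ * t) ^ j = 1 - t ^ n := by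
    rw [mul_neg_geom_sum, mul_pow, hξ, one_mul]
  have hden : 1 - t ^ n ≠ 0 := sub_ne_zero.2 ht.symm
  have hne : 1 - ξ * t ≠ 0 := left_ne_zero_of_mul (hgeom ▸ hden)
  rw [eq_div_iff hden, ← hgeom, inv_mul_cancel_left₀ hne]

namespace IsPrimitiveRoot

variable {K : Type*} [Field K] {ζ : K} {n : ℕ}

theorem sum_nthRootsFinset_zpow (hζ : IsPrimitiveRoot ζ n) (hn : 0 < n) (m : ℤ) :
    ∑ ξ ∈ nthRootsFinset n (1 : K), ξ ^ m = if (n : ℤ) ∣ m then (n : K) else 0 := by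
  split_ifs with hm
  · obtain ⟨c, rfl⟩ := hm
    have hpow : ∀ ξ ∈ nthRootsFinset n (1 : K), ξ ^ ((n : ℤ) * c) = 1 := fun ξ hξ => by
      rw [zpow_mul, zpow_natCast, (Polynomial.mem_nthRootsFinset hn 1).1 hξ, one_zpow]
    rw [sum_congr rfl hpow, sum_const, hζ.card_nthRootsFinset, nsmul_one]
  · -- multiplication by `ζ` permutes the `n`-th roots of unity, and `ζ ^ m ≠ 1`
    have hζ0 : ζ ≠ 0 := hζ.ne_zero hn.ne'
    have hmem : ∀ {η}, IsPrimitiveRoot η n → ∀ ξ ∈ nthRootsFinset n (1 : K),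
        η * ξ ∈ nthRootsFinset n (1 : K) := fun hη ξ hξ => by
      simpa using mul_mem_nthRootsFinset (hη.mem_nthRootsFinset hn) hξ
    have hshift : ζ ^ m * ∑ ξ ∈ nthRootsFinset n (1 : K), ξ ^ m
        = 1 * ∑ ξ ∈ nthRootsFinset n (1 : K), ξ ^ m := by
      rw [mul_sum, one_mul]
      simp_rw [← mul_zpow]
      exact sum_nbij' (ζ * ·) (ζ⁻¹ * ·) (hmem hζ) (hmem hζ.inv)
        (fun ξ _ => inv_mul_cancel_left₀ hζ0 ξ) (fun ξ _ => mul_inv_cancel_left₀ hζ0 ξ)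
        (fun _ _ => rfl)
    by_contra hS
    exact hm ((hζ.zpow_eq_one_iff_dvd m).1 (mul_right_cancel₀ hS hshift))

theorem sum_nthRootsFinset_zpow_sub {j k : ℕ} (hζ : IsPrimitiveRoot ζ n) (hj : j < n)
    (hk : k < n) :
    ∑ ξ ∈ nthRootsFinset n (1 : K), ξ ^ ((j : ℤ) - k) = if j = k then (n : K) else 0 := by
  have hdvd : (n : ℤ) ∣ (j : ℤ) - k ↔ j = k :=
    ⟨fun h => ((Nat.modEq_iff_dvd.2 h).eq_of_lt_of_lt hk hj).symm, fun h => by simp [h]⟩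
  rw [hζ.sum_nthRootsFinset_zpow (by omega), if_congr hdvd rfl rfl]

theorem sum_nthRootsFinset_inv_mul_pow_div {k : ℕ} (hζ : IsPrimitiveRoot ζ n) (hk : k < n)
    (c t : K) (ht : t ^ n ≠ 1) :
    ∑ ξ ∈ nthRootsFinset n (1 : K), (ξ⁻¹ * c) ^ k / (1 - ξ * t)
      = n * (c * t) ^ k / (1 - t ^ n) := by
  have hn : 0 < n := by omega
  calc ∑ ξ ∈ nthRootsFinset n (1 : K), (ξ⁻¹ * c) ^ k / (1 - ξ * t)
      = ∑ ξ ∈ nthRootsFinset n (1 : K), ∑ j ∈ range n,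
          c ^ k * t ^ j * ξ ^ ((j : ℤ) - k) / (1 - t ^ n) := by
        refine sum_congr rfl fun ξ hξ => ?_
        have hξn : ξ ^ n = 1 := (Polynomial.mem_nthRootsFinset hn 1).1 hξ
        have hξ0 : ξ ≠ 0 := ne_zero_of_mem_nthRootsFinset one_ne_zero hξ
        rw [div_eq_mul_inv, inv_one_sub_mul_eq_geom_sum_div hξn ht, mul_div_assoc', mul_sum,
          sum_div]
        refine sum_congr rfl fun j _ => ?_
        rw [zpow_sub₀ hξ0, zpow_natCast, zpow_natCast]
        ring
    _ = ∑ j ∈ range n, c ^ k * t ^ j *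
          (∑ ξ ∈ nthRootsFinset n (1 : K), ξ ^ ((j : ℤ) - k)) / (1 - t ^ n) := by
        rw [sum_comm]
        simp_rw [mul_sum, sum_div]
    _ = ∑ j ∈ range n, if j = k then n * (c * t) ^ k / (1 - t ^ n) else 0 := by
        refine sum_congr rfl fun j hj => ?_
        rw [hζ.sum_nthRootsFinset_zpow_sub (mem_range.1 hj) hk]
        by_cases h : j = k
        · rw [if_pos h, if_pos h, h]
          ring
        · rw [if_neg h, if_neg h, mul_zero, zero_div]
    _ = n * (c * t) ^ k / (1 - t ^ n) := by rw [sum_ite_eq', if_pos (mem_range.2 hk)]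

end IsPrimitiveRoot

theorem avg_monomial_over_roots_general (a k : ℕ) (hka : k < a)
    (A t : ℂ) (ht : t ^ a ≠ 1) :
    (1 / (a : ℂ)) * ∑ ξ ∈ Polynomial.nthRootsFinset a (1 : ℂ), (ξ⁻¹ * A * t) ^ k / (1 - ξ * t)
      = A ^ k * t ^ (2 * k) / (1 - t ^ a) := by
  have ha : a ≠ 0 := by omega
  simp_rw [mul_assoc _ A t]
  rw [(Complex.isPrimitiveRoot_exp a ha).sum_nthRootsFinset_inv_mul_pow_div hka (A * t) t ht]
  field_simp
  ring

theorem avg_monomial_over_roots (a k : ℕ) (hk : 1 ≤ k) (hka : k < a)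
    (A t : ℂ) (ht : t ^ a ≠ 1) :
    (1 / (a : ℂ)) * ∑ ξ ∈ Polynomial.nthRootsFinset a (1 : ℂ), (ξ⁻¹ * A * t) ^ k / (1 - ξ * t)
      = A ^ k * t ^ (2 * k) / (1 - t ^ a) :=
  avg_monomial_over_roots_general a k hka A t ht
end

section
/- For coprime integers p, a ≥ 2, the Alexander polynomial Δ(t) = (t^{pa}−1)(t−1)/((t^p−1)(t^a−1)) of the torus knot (p,a) satisfies: Δ(t) = 1 + Σ_{i: p∤r_i} Σ_{j=0}^{x_i−1} t^{r_i + ja}(t−1), where for each i ∈ {0,…,a−1}, pi = x_i a + r_i with 0 ≤ r_i < a. In particular, the coefficients of Δ(t) form an alternating set. -/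
/-!
Write `p i = x_i a + r_i`. Against `t ^ a - 1` the `i`-th inner sum telescopes to
`(t - 1) (t ^ (p i) - t ^ r_i)`; since `i ↦ r_i` permutes `{0, …, a - 1}`, the whole bracket times
`t ^ a - 1` is `(t - 1) ∑ i < a, t ^ (p i)`, and one more geometric sum gives the defining identity
of `Δ`. Indices with `p ∣ r_i` have `x_i = 0`, so the filter is harmless.

The exponents `r_i + j a` are pairwise distinct (they are the gaps of the semigroup generated by
`p` and `a`), so `Δ = 1 + ∑ e ∈ E, t ^ e (t - 1)` for a finite set `E`. The coefficient of `t ^ k`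
in such a polynomial is `[k ∉ E] - [k - 1 ∉ E]`: the increments of a `0/1` sequence that is
eventually `1`, which forces the alternation.
-/

open Polynomial

open Finset

theorem Finset.card_filter_lt_eq (s : Finset ℕ) (k : ℕ) :
    #{j ∈ s | k < j} = #{j ∈ s | k + 1 < j} + if k + 1 ∈ s then 1 else 0 := by
  have : {j ∈ s | k < j} = {j ∈ s | k + 1 < j} ∪ {j ∈ s | j = k + 1} := by
    rw [← filter_or]; exact filter_congr fun j _ => by omega
  rw [this, card_union_of_disjoint (disjoint_filter.2 fun j _ h => by omega), filter_eq']
  split_ifs <;> simp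

noncomputable def gapPolynomial (E : Finset ℕ) : ℤ[X] :=
  1 + ∑ e ∈ E, X ^ e * (X - 1)

namespace gapPolynomial

variable (E : Finset ℕ)

theorem coeff_eq (k : ℕ) :
    (gapPolynomial E).coeff k =
      (if k = 0 then 1 else 0) + (#{e ∈ E | k = e + 1} : ℤ) - (if k ∈ E then 1 else 0) := by
  simp only [gapPolynomial, mul_sub, ← pow_succ, mul_one, coeff_add, coeff_one, finsetSum_coeff,
    coeff_sub, coeff_X_pow, sum_sub_distrib, sum_ite_eq, sum_boole]
  ring

theorem coeff_zero : (gapPolynomial E).coeff 0 = if 0 ∈ E then 0 else 1 := by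
  by_cases h : 0 ∈ E <;> simp [coeff_eq, h]

theorem coeff_succ (k : ℕ) :
    (gapPolynomial E).coeff (k + 1) = (if k + 1 ∈ E then 0 else 1) - (if k ∈ E then 0 else 1) := by
  by_cases h : k ∈ E <;> by_cases h' : k + 1 ∈ E <;> simp [coeff_eq, filter_eq, h, h']

theorem coeff_eq_zero_or (k : ℕ) :
    (gapPolynomial E).coeff k = 0 ∨ (gapPolynomial E).coeff k = if k ∈ E then -1 else 1 := by
  cases k with
  | zero => by_cases h : 0 ∈ E <;> simp [coeff_zero, h]
  | succ k => by_cases h : k + 1 ∈ E <;> by_cases h' : k ∈ E <;> simp [coeff_succ, h, h']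

theorem neg_one_pow_card_support_gt (i : ℕ) :
    (-1 : ℤ) ^ #{j ∈ (gapPolynomial E).support | i < j} = if i ∈ E then -1 else 1 := by
  obtain ⟨N, hN⟩ := E.exists_nat_subset_range
  have not_mem_of_le (k : ℕ) (hk : N ≤ k) : k ∉ E := fun h => by
    have := mem_range.1 (hN h); omega
  have top (i : ℕ) (hi : N ≤ i) :
      (-1 : ℤ) ^ #{j ∈ (gapPolynomial E).support | i < j} = if i ∈ E then -1 else 1 := by
    have : {j ∈ (gapPolynomial E).support | i < j} = ∅ := by
      refine filter_eq_empty_iff.2 fun j hj hij => ?_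
      obtain ⟨k, rfl⟩ := Nat.exists_eq_add_of_lt hij
      simp [coeff_succ, not_mem_of_le (i + k + 1) (by omega), not_mem_of_le (i + k) (by omega)]
        at hj
    simp [this, not_mem_of_le i hi]
  rcases le_total N i with hi | hi
  · exact top i hi
  induction hi using Nat.decreasingInduction with
  | self => exact top N le_rfl
  | of_succ k hk ih =>
    rw [card_filter_lt_eq, pow_add, ih]
    by_cases h : k + 1 ∈ E <;> by_cases h' : k ∈ E <;> simp [coeff_succ, h, h']

theorem alternatingCoeffs : AlternatingCoeffs (gapPolynomial E) := fun i => by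
  rw [neg_one_pow_card_support_gt]
  rcases coeff_eq_zero_or E i with h | h <;> rw [h]
  · simp
  · split_ifs <;> simp

end gapPolynomial

theorem sum_range_pow_add_mul_mul_sub_one {R : Type*} [CommRing R] (t : R) (r a x : ℕ) :
    (∑ j ∈ range x, t ^ (r + j * a)) * (t ^ a - 1) = t ^ (r + x * a) - t ^ r := by
  simp_rw [pow_add, pow_mul', ← mul_sum, mul_assoc, geom_sum_mul]
  ring

def torusKnotGaps (p a : ℕ) : Finset ℕ :=
  ((range a).sigma fun i => range (p * i / a)).image fun x => p * x.1 % a + x.2 * a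

namespace Nat.Coprime

variable {p a : ℕ} (hcop : p.Coprime a)
include hcop

theorem injOn_mul_mod : Set.InjOn (fun i => p * i % a) (range a) := fun i hi j hj h => by
  have := (show p * i ≡ p * j [MOD a] from h).cancel_left_of_coprime hcop.symm
  rwa [Nat.ModEq, Nat.mod_eq_of_lt (mem_range.1 hi), Nat.mod_eq_of_lt (mem_range.1 hj)] at this

theorem sum_range_mul_mod {M : Type*} [AddCommMonoid M] (f : ℕ → M) :
    ∑ i ∈ range a, f (p * i % a) = ∑ k ∈ range a, f k := by
  have maps : Set.MapsTo (fun i => p * i % a) (range a) (range a) := fun i hi =>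
    mem_range.2 (Nat.mod_lt _ (Nat.zero_lt_of_lt (mem_range.1 hi)))
  exact sum_nbij _ maps hcop.injOn_mul_mod
    (surjOn_of_injOn_of_card_le _ maps hcop.injOn_mul_mod le_rfl) fun _ _ => rfl

theorem div_eq_zero_of_dvd_mod {i : ℕ} (hi : i < a) (hdvd : p ∣ p * i % a) : p * i / a = 0 := by
  rcases Nat.eq_zero_or_pos p with rfl | hp
  · simp
  have hx : p ∣ a * (p * i / a) := by
    have := Nat.div_add_mod (p * i) a
    rw [show a * (p * i / a) = p * i - p * i % a by omega]
    exact Nat.dvd_sub (Nat.dvd_mul_right p i) hdvd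
  refine Nat.eq_zero_of_dvd_of_lt (hcop.dvd_of_dvd_mul_left hx) ?_
  exact (Nat.div_lt_iff_lt_mul (by omega)).2 (by nlinarith)

theorem sum_filter_not_dvd_mod {M : Type*} [AddCommMonoid M] (f : ℕ → ℕ → M) :
    ∑ i ∈ range a with ¬ p ∣ p * i % a, ∑ j ∈ range (p * i / a), f i j
      = ∑ i ∈ range a, ∑ j ∈ range (p * i / a), f i j := by
  refine sum_filter_of_ne fun i hi hne hdvd => hne ?_
  rw [hcop.div_eq_zero_of_dvd_mod (mem_range.1 hi) hdvd, sum_range_zero]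

theorem alexander_torusKnot_identity {R : Type*} [CommRing R] (t : R) :
    (1 + ∑ i ∈ range a, ∑ j ∈ range (p * i / a), t ^ (p * i % a + j * a) * (t - 1))
      * ((t ^ p - 1) * (t ^ a - 1)) = (t ^ (p * a) - 1) * (t - 1) := by
  have block (i : ℕ) : (∑ j ∈ range (p * i / a), t ^ (p * i % a + j * a) * (t - 1)) * (t ^ a - 1)
      = (t - 1) * (t ^ (p * i) - t ^ (p * i % a)) := by
    rw [← sum_mul, mul_right_comm, sum_range_pow_add_mul_mul_sub_one, Nat.mod_add_div', mul_comm]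
  have key : (1 + ∑ i ∈ range a, ∑ j ∈ range (p * i / a), t ^ (p * i % a + j * a) * (t - 1))
      * (t ^ a - 1) = (t - 1) * ∑ i ∈ range a, (t ^ p) ^ i := by
    rw [add_mul, one_mul, sum_mul, sum_congr rfl fun i _ => block i, ← mul_sum, sum_sub_distrib,
      hcop.sum_range_mul_mod (t ^ ·), ← geom_sum_mul, mul_comm]
    simp_rw [pow_mul]
    ring
  calc _ = (t - 1) * ((∑ i ∈ range a, (t ^ p) ^ i) * (t ^ p - 1)) := by
        rw [mul_comm (t ^ p - 1), ← mul_assoc, key, mul_assoc]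
    _ = (t ^ (p * a) - 1) * (t - 1) := by rw [geom_sum_mul, ← pow_mul, mul_comm]

theorem sum_torusKnotGaps {M : Type*} [AddCommMonoid M] (ha : 0 < a) (f : ℕ → M) :
    ∑ e ∈ torusKnotGaps p a, f e
      = ∑ i ∈ range a, ∑ j ∈ range (p * i / a), f (p * i % a + j * a) := by
  rw [torusKnotGaps, sum_image, sum_sigma]
  rintro ⟨i, j⟩ hij ⟨i', j'⟩ hij' h
  simp only [coe_sigma, Set.mem_sigma_iff, coe_range, Set.mem_Iio] at hij hij' h
  have hi : i = i' := hcop.injOn_mul_mod (mem_range.2 hij.1) (mem_range.2 hij'.1) <| by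
    simpa [Nat.add_mul_mod_self_right] using congrArg (· % a) h
  subst hi
  have : j * a = j' * a := by omega
  rw [Nat.eq_of_mul_eq_mul_right ha this]

end Nat.Coprime

/-- The Alexander polynomial of the `(p,a)` torus knot in semigroup form; in particular
its coefficients form an alternating set. Here `p*i = x_i * a + r_i` with
`r_i = p*i % a` and `x_i = p*i / a`. -/
theorem torus_knot_alexander_alternating (p a : ℕ) (hp : 2 ≤ p) (ha : 2 ≤ a)
    (hcop : Nat.Coprime p a) (Δ : Polynomial ℤ)
    (hΔ : Δ * ((X ^ p - 1) * (X ^ a - 1)) = (X ^ (p * a) - 1) * (X - 1)) :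
    Δ = 1 + ∑ i ∈ (Finset.range a).filter (fun i => ¬ p ∣ (p * i % a)),
          ∑ j ∈ Finset.range (p * i / a), X ^ (p * i % a + j * a) * (X - 1)
    ∧ AlternatingCoeffs Δ := by
  have hM : ((X : ℤ[X]) ^ p - 1) * (X ^ a - 1) ≠ 0 :=
    mul_ne_zero (X_pow_sub_C_ne_zero (by omega) 1) (X_pow_sub_C_ne_zero (by omega) 1)
  have hΔ_eq : Δ = 1 + ∑ i ∈ range a, ∑ j ∈ range (p * i / a), X ^ (p * i % a + j * a) * (X - 1) :=
    mul_right_cancel₀ hM (hΔ.trans (hcop.alexander_torusKnot_identity X).symm)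
  rw [hcop.sum_filter_not_dvd_mod]
  refine ⟨hΔ_eq, ?_⟩
  rw [hΔ_eq, ← hcop.sum_torusKnotGaps (by omega) fun e => (X : ℤ[X]) ^ e * (X - 1)]
  exact gapPolynomial.alternatingCoeffs _
end

section
/- Let f have Newton pairs {(p_k,q_k)}_{k=1}^s with p_k, q_k ≥ 2, gcd(p_k,q_k)=1, and define a_1 = q_1, a_{k+1} = q_{k+1} + p_{k+1} p_k a_k. Then for every l with 2 ≤ l ≤ s, a_l > p_l · deg Δ(f_{(l-1)}), where deg Δ(f_{(l)}) = (p_l−1)(a_l−1) + p_l · deg Δ(f_{(l-1)}) with deg Δ(f_{(0)}) = 0. -/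
/-!
By induction on `k`, `μ_k < p_k a_k`: for `k = 1` this is `(p_1 - 1)(q_1 - 1) < p_1 q_1`, and if
`μ_k < p_k a_k` then `p_{k+1} μ_k < p_{k+1} p_k a_k ≤ a_{k+1}`, so
`μ_{k+1} ≤ (p_{k+1} - 1)(a_{k+1} - 1) + (a_{k+1} - 1) = p_{k+1}(a_{k+1} - 1) < p_{k+1} a_{k+1}`.
The inequality `p_{k+1} μ_k < a_{k+1}` of the induction step is the claim.
-/

theorem Nat.mul_lt_add_mul_mul {p p' a' m : ℕ} (q : ℕ) (hp : 0 < p) (h : m < p' * a') :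
    p * m < q + p * p' * a' := by
  have : p * m < p * (p' * a') := Nat.mul_lt_mul_of_pos_left h hp
  rw [← Nat.mul_assoc] at this
  omega

theorem Nat.pred_mul_pred_add_lt_mul {p a m : ℕ} (hp : 0 < p) (h : m < a) :
    (p - 1) * (a - 1) + m < p * a := by
  obtain ⟨p, rfl⟩ := Nat.exists_eq_add_of_lt hp
  obtain ⟨a, rfl⟩ := Nat.exists_eq_add_of_lt (Nat.zero_lt_of_lt h)
  simp only [Nat.zero_add, Nat.add_sub_cancel]
  nlinarith

section NewtonPairs

variable {s : ℕ} {p q a μ : ℕ → ℕ}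

theorem deg_lt_p_mul_a
    (hp : ∀ k, 1 ≤ k → k ≤ s → 2 ≤ p k)
    (hq : ∀ k, 1 ≤ k → k ≤ s → 2 ≤ q k)
    (ha1 : a 1 = q 1)
    (harec : ∀ k, 1 ≤ k → k + 1 ≤ s → a (k + 1) = q (k + 1) + p (k + 1) * p k * a k)
    (hμ0 : μ 0 = 0)
    (hμ : ∀ l, 1 ≤ l → l ≤ s → μ l = (p l - 1) * (a l - 1) + p l * μ (l - 1)) :
    ∀ k, 1 ≤ k → k ≤ s → μ k < p k * a k := by
  intro k hk
  induction k, hk using Nat.le_induction with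
  | base =>
    intro hs
    rw [hμ 1 le_rfl hs, hμ0, ha1, Nat.mul_zero, Nat.add_zero]
    exact Nat.mul_lt_mul'' (by grind) (by grind)
  | succ k hk ih =>
    intro hs
    have hpos : 0 < p (k + 1) := by grind
    have hstep : p (k + 1) * μ k < a (k + 1) := by
      rw [harec k hk hs]
      exact Nat.mul_lt_add_mul_mul _ hpos (ih (by omega))
    rw [hμ (k + 1) (by omega) hs, Nat.add_sub_cancel]
    exact Nat.pred_mul_pred_add_lt_mul hpos hstep

end NewtonPairs

theorem a_gt_p_mul_deg_general (s : ℕ) (p q a μ : ℕ → ℕ)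
    (hp : ∀ k, 1 ≤ k → k ≤ s → 2 ≤ p k)
    (hq : ∀ k, 1 ≤ k → k ≤ s → 2 ≤ q k)
    (ha1 : a 1 = q 1)
    (harec : ∀ k, 1 ≤ k → k + 1 ≤ s → a (k + 1) = q (k + 1) + p (k + 1) * p k * a k)
    (hμ0 : μ 0 = 0)
    (hμ : ∀ l, 1 ≤ l → l ≤ s → μ l = (p l - 1) * (a l - 1) + p l * μ (l - 1)) :
    ∀ l, 2 ≤ l → l ≤ s → p l * μ (l - 1) < a l := by
  intro l hl hs
  obtain ⟨k, rfl⟩ : ∃ k, l = k + 1 := ⟨l - 1, by omega⟩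
  rw [Nat.add_sub_cancel, harec k (by omega) hs]
  exact Nat.mul_lt_add_mul_mul _ (by grind)
    (deg_lt_p_mul_a hp hq ha1 harec hμ0 hμ k (by omega) (by omega))

/-- For the Newton pairs `(p_k, q_k)` of an irreducible plane curve singularity,
with `a_1 = q_1`, `a_{k+1} = q_{k+1} + p_{k+1} p_k a_k`, and `μ_l = deg Δ(f_{(l)})`
given recursively by `μ_0 = 0`, `μ_l = (p_l-1)(a_l-1) + p_l μ_{l-1}`, one has
`a_l > p_l · μ_{l-1}` for all `2 ≤ l ≤ s`. -/
theorem a_gt_p_mul_deg (s : ℕ) (p q a μ : ℕ → ℕ)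
    (hp : ∀ k, 1 ≤ k → k ≤ s → 2 ≤ p k)
    (hq : ∀ k, 1 ≤ k → k ≤ s → 2 ≤ q k)
    (hcop : ∀ k, 1 ≤ k → k ≤ s → Nat.Coprime (p k) (q k))
    (ha1 : a 1 = q 1)
    (harec : ∀ k, 1 ≤ k → k + 1 ≤ s → a (k + 1) = q (k + 1) + p (k + 1) * p k * a k)
    (hμ0 : μ 0 = 0)
    (hμ : ∀ l, 1 ≤ l → l ≤ s → μ l = (p l - 1) * (a l - 1) + p l * μ (l - 1)) :
    ∀ l, 2 ≤ l → l ≤ s → p l * μ (l - 1) < a l :=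
  a_gt_p_mul_deg_general s p q a μ hp hq ha1 harec hμ0 hμ
end

section
/- Define the characteristic polynomials recursively by Δ_1(t) = (t^{p_1 a_1}−1)(t−1)/((t^{p_1}−1)(t^{a_1}−1)) and Δ_l(t) = [(t^{p_l a_l}−1)(t−1)/((t^{p_l}−1)(t^{a_l}−1))] · Δ_{l-1}(t^{p_l}) for l ≥ 2, where p_k ≥ 2, a_k satisfy gcd(p_k,a_k) = 1 and a_{k+1} > p_{k+1} p_k a_k. Then for each l, the coefficients of Δ_l(t) form an alternating set; moreover Δ_l(t) = 1 + Σ_{i=1}^t Σ_{j=0}^{n_i} t^{r_i + j a_l}(t−1) for suitable residues 0 < r_1,…,r_t < a_l and nonnegative integers n_i. -/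
/-!
`Δ_l` is `(1 - t)` times the generating series of the semigroup `Γ_l = p_l Γ_{l-1} + ℕ a_l`
(`Γ_0 = ℕ`). Multiplying by `1 - t^{a_l}` turns the generating series of `Γ_l` into that of its
Apéry set with respect to `a_l`, and that Apéry set is `p_l` times the Apéry set of `Γ_{l-1}`
(this uses `gcd(p_l, a_l) = 1` and `a_l ∈ Γ_{l-1}`, which holds because `Γ_{l-1}` contains every
`n ≥ p_{l-1} a_{l-1}`); this is exactly the defining recursion of `Δ_l`.

Hence `Δ_l = 1 + Σ_{g ∉ Γ_l} t^g (t - 1)`: the coefficients of `Δ_l` are the jumps of the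
indicator of `Γ_l`, a `0/1` sequence that is eventually `1`, so they alternate and end with `+1`.
The gaps are closed under subtracting `a_l` and `0` is not a gap, so grouping the gaps by their
residue modulo `a_l` gives the second form.
-/

open Polynomial

noncomputable def indicatorSeries (A : Set ℕ) : PowerSeries ℤ :=
  PowerSeries.mk (A.indicator 1)

def apery (A : Set ℕ) (d : ℕ) : Set ℕ := A \ (· + d) '' A

@[simp]
theorem coeff_indicatorSeries (A : Set ℕ) (n : ℕ) :
    PowerSeries.coeff n (indicatorSeries A) = A.indicator 1 n :=
  PowerSeries.coeff_mk _ _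

theorem one_sub_X_pow_mul_indicatorSeries {A : Set ℕ} {d : ℕ} (hA : ∀ n ∈ A, n + d ∈ A) :
    (1 - PowerSeries.X ^ d) * indicatorSeries A = indicatorSeries (apery A d) := by
  classical
  ext n
  rw [sub_mul, one_mul, map_sub, PowerSeries.coeff_X_pow_mul']
  simp only [coeff_indicatorSeries, apery, Set.indicator_apply, Set.mem_sdiff, Set.mem_image]
  by_cases hdn : d ≤ n
  · have hshift : (∃ m, m ∈ A ∧ m + d = n) ↔ n - d ∈ A :=
      ⟨fun ⟨m, hm, hmn⟩ => by rwa [← hmn, Nat.add_sub_cancel],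
        fun h => ⟨n - d, h, Nat.sub_add_cancel hdn⟩⟩
    have hclosed : n - d ∈ A → n ∈ A := fun h => by simpa [Nat.sub_add_cancel hdn] using hA _ h
    rw [if_pos hdn, hshift]
    by_cases hn : n ∈ A <;> by_cases hnd : n - d ∈ A <;> simp_all
  · have hshift : ¬ ∃ m, m ∈ A ∧ m + d = n := fun ⟨m, _, hmn⟩ => hdn (hmn ▸ Nat.le_add_left d m)
    simp [hdn, hshift]

theorem expand_indicatorSeries {p : ℕ} (hp : p ≠ 0) (A : Set ℕ) :
    PowerSeries.expand p hp (indicatorSeries A) = indicatorSeries ((p * ·) '' A) := by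
  classical
  ext n
  rw [PowerSeries.coeff_expand, coeff_indicatorSeries, coeff_indicatorSeries]
  by_cases hpn : p ∣ n
  · obtain ⟨m, rfl⟩ := hpn
    simp [Set.indicator_apply, Nat.mul_div_cancel_left m (Nat.pos_of_ne_zero hp),
      (mul_right_injective₀ hp).eq_iff]
  · have : n ∉ (p * ·) '' A := fun ⟨m, _, hmn⟩ => hpn ⟨m, hmn.symm⟩
    simp [hpn, this]

theorem coe_comp_X_pow {R : Type*} [CommRing R] {p : ℕ} (hp : p ≠ 0) (f : R[X]) :
    ((f.comp (X ^ p) : R[X]) : PowerSeries R) = PowerSeries.expand p hp f := by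
  ext n
  rw [Polynomial.coeff_coe, ← Polynomial.expand_eq_comp_X_pow, Polynomial.coeff_expand
    (Nat.pos_of_ne_zero hp), PowerSeries.coeff_expand, Polynomial.coeff_coe]

theorem X_pow_sub_one_ne_zero {R : Type*} [CommRing R] [Nontrivial R] {d : ℕ} (hd : d ≠ 0) :
    (PowerSeries.X ^ d - 1 : PowerSeries R) ≠ 0 := fun h => by
  simpa [zero_pow hd] using congrArg PowerSeries.constantCoeff h

def extendSemigroup (p a : ℕ) (S : AddSubmonoid ℕ) : AddSubmonoid ℕ where
  carrier := {n | ∃ s ∈ S, ∃ x, n = p * s + x * a}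
  zero_mem' := ⟨0, S.zero_mem, 0, by ring⟩
  add_mem' := by
    rintro _ _ ⟨s, hs, x, rfl⟩ ⟨t, ht, y, rfl⟩
    exact ⟨s + t, S.add_mem hs ht, x + y, by ring⟩

section extendSemigroup

variable {p a : ℕ} {S : AddSubmonoid ℕ}

theorem mem_extendSemigroup {n : ℕ} :
    n ∈ extendSemigroup p a S ↔ ∃ s ∈ S, ∃ x, n = p * s + x * a :=
  Iff.rfl

theorem self_mem_extendSemigroup : a ∈ extendSemigroup p a S :=
  ⟨0, S.zero_mem, 1, by ring⟩

theorem apery_extendSemigroup (hp : 0 < p) (hcop : p.Coprime a) (haS : a ∈ S) :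
    apery (extendSemigroup p a S) a = (p * ·) '' apery S a := by
  ext n
  simp only [apery, Set.mem_sdiff, Set.mem_image, SetLike.mem_coe, mem_extendSemigroup, not_exists,
    not_and]
  constructor
  · rintro ⟨⟨s, hs, x, rfl⟩, hmin⟩
    obtain rfl : x = 0 := by
      by_contra hx
      obtain ⟨x, rfl⟩ := Nat.exists_eq_add_one_of_ne_zero hx
      exact hmin _ ⟨s, hs, x, rfl⟩ (by ring)
    refine ⟨s, ⟨hs, fun m hm hms => ?_⟩, by ring⟩
    obtain ⟨p', rfl⟩ := Nat.exists_eq_add_one_of_ne_zero hp.ne'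
    exact hmin _ ⟨m, hm, p', rfl⟩ (by rw [← hms]; ring)
  · rintro ⟨s, ⟨hs, hmin⟩, rfl⟩
    refine ⟨⟨s, hs, 0, by ring⟩, ?_⟩
    rintro _ ⟨t, ht, x, rfl⟩ hts
    obtain ⟨c, hc⟩ : p ∣ x + 1 :=
      hcop.dvd_of_dvd_mul_right ((Nat.dvd_add_right ⟨t, rfl⟩).mp ⟨s, by rw [← hts]; ring⟩)
    obtain ⟨c, rfl⟩ := Nat.exists_eq_add_one_of_ne_zero (by rintro rfl; simp at hc : c ≠ 0)
    have hs' : p * s = p * (t + c * a + a) := by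
      calc p * s = p * t + (x + 1) * a := by rw [← hts]; ring
        _ = p * (t + c * a + a) := by rw [hc]; ring
    exact hmin _ (S.add_mem ht (S.nsmul_mem haS c)) (Nat.eq_of_mul_eq_mul_left hp hs').symm

theorem mem_extendSemigroup_of_le {c n : ℕ} (hp : 0 < p) (hcop : p.Coprime a)
    (hS : ∀ m, c ≤ m → m ∈ S) (hn : p * c + (p - 1) * a ≤ n) : n ∈ extendSemigroup p a S := by
  have : NeZero p := ⟨hp.ne'⟩
  -- take `y < p` with `y * a ≡ n [MOD p]`: then `n - y * a` is a multiple of `p` and `≥ p * c`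
  set y := ((n : ZMod p) * (a : ZMod p)⁻¹).val
  have hyp : y < p := ZMod.val_lt _
  have hya : y * a ≡ n [MOD p] := by
    rw [← ZMod.natCast_eq_natCast_iff, Nat.cast_mul, ZMod.natCast_zmod_val, mul_assoc,
      mul_comm _ (a : ZMod p), ZMod.coe_mul_inv_eq_one a hcop.symm, mul_one]
  have hyle : y * a ≤ (p - 1) * a := Nat.mul_le_mul_right a (by omega)
  obtain ⟨m, hm⟩ := (Nat.modEq_iff_dvd' (by omega)).mp hya
  have hcm : c ≤ m := Nat.le_of_mul_le_mul_left (by omega) hp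
  exact ⟨m, hS m hcm, y, by omega⟩

theorem one_sub_X_pow_mul_indicatorSeries_extendSemigroup (hp : p ≠ 0) (hcop : p.Coprime a)
    (haS : a ∈ S) :
    (1 - PowerSeries.X ^ a) * indicatorSeries (extendSemigroup p a S)
      = PowerSeries.expand p hp ((1 - PowerSeries.X ^ a) * indicatorSeries S) := by
  rw [one_sub_X_pow_mul_indicatorSeries fun n hn => add_mem hn self_mem_extendSemigroup,
    one_sub_X_pow_mul_indicatorSeries fun n hn => add_mem hn haS, expand_indicatorSeries,
    apery_extendSemigroup (Nat.pos_of_ne_zero hp) hcop haS]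

theorem coe_eq_one_sub_X_mul_indicatorSeries_extendSemigroup (hp : p ≠ 0) (ha : a ≠ 0)
    (hcop : p.Coprime a) (haS : a ∈ S) {D D' : ℤ[X]}
    (hD' : (D' : PowerSeries ℤ) = (1 - PowerSeries.X) * indicatorSeries S)
    (hrec : D * ((X ^ p - 1) * (X ^ a - 1)) = (X ^ (p * a) - 1) * (X - 1) * D'.comp (X ^ p)) :
    (D : PowerSeries ℤ) = (1 - PowerSeries.X) * indicatorSeries (extendSemigroup p a S) := by
  have hcoe := congrArg ((↑) : ℤ[X] → PowerSeries ℤ) hrec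
  push_cast at hcoe
  rw [coe_comp_X_pow hp, hD', map_mul, map_sub, map_one, PowerSeries.expand_X] at hcoe
  have key := one_sub_X_pow_mul_indicatorSeries_extendSemigroup hp hcop haS
  rw [map_mul, map_sub, map_one, map_pow, PowerSeries.expand_X] at key
  refine mul_right_cancel₀ (mul_ne_zero (X_pow_sub_one_ne_zero hp) (X_pow_sub_one_ne_zero ha)) ?_
  rw [hcoe]
  linear_combination (1 - PowerSeries.X) * (PowerSeries.X ^ p - 1) * key

end extendSemigroup

theorem coeff_one_sub_X_mul_indicatorSeries (Γ : Set ℕ) (n : ℕ) :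
    PowerSeries.coeff n ((1 - PowerSeries.X) * indicatorSeries Γ)
      = Γ.indicator 1 n - if n = 0 then 0 else Γ.indicator 1 (n - 1) := by
  rcases n with _ | n
  · simp [sub_mul, indicatorSeries]
  · simp [sub_mul, PowerSeries.coeff_succ_X_mul]

theorem Finset.card_filter_lt_eq_card_filter_succ_lt (s : Finset ℕ) (n : ℕ) :
    (s.filter (n < ·)).card = (s.filter (n + 1 < ·)).card + if n + 1 ∈ s then 1 else 0 := by
  have hsplit : s.filter (n < ·) = s.filter (n + 1 < ·) ∪ s.filter (· = n + 1) := by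
    rw [← Finset.filter_or]
    exact Finset.filter_congr fun j _ => by omega
  rw [hsplit, Finset.card_union_of_disjoint (Finset.disjoint_filter.mpr fun j _ h => by omega),
    Finset.filter_eq']
  split_ifs <;> simp

theorem alternatingCoeffs_of_coe_eq {Γ : Set ℕ} {c : ℕ} (hΓ : ∀ n, c ≤ n → n ∈ Γ) {D : ℤ[X]}
    (hD : (D : PowerSeries ℤ) = (1 - PowerSeries.X) * indicatorSeries Γ) : AlternatingCoeffs D := by
  classical
  set h : ℕ → ℤ := Γ.indicator 1
  have hval (n : ℕ) : h n = 0 ∨ h n = 1 := by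
    by_cases hn : n ∈ Γ <;> simp [h, hn]
  have hcoeff (n : ℕ) : D.coeff n = h n - if n = 0 then 0 else h (n - 1) := by
    rw [← Polynomial.coeff_coe, hD, coeff_one_sub_X_mul_indicatorSeries]
  set N : ℕ → ℕ := fun n => (D.support.filter (n < ·)).card
  -- `h` is eventually `1` and flips exactly at the support of `D`
  have hsign : ∀ n, (-1) ^ N n = 2 * h n - 1 := by
    have htop : ∀ k n, c + D.natDegree ≤ n + k → (-1) ^ N n = 2 * h n - 1 := by
      intro k
      induction k with
      | zero =>
        intro n hn
        have hN : N n = 0 := Finset.card_eq_zero.mpr <| Finset.filter_eq_empty_iff.mpr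
          fun j hj hnj => by have := le_natDegree_of_mem_supp j hj; omega
        simp [hN, h, hΓ n (by omega)]
      | succ k ih =>
        intro n hn
        have hN := Finset.card_filter_lt_eq_card_filter_succ_lt D.support n
        have hc := hcoeff (n + 1)
        simp only [Nat.add_one_ne_zero, if_false, Nat.add_sub_cancel] at hc
        rw [show N n = _ from hN, pow_add, ih (n + 1) (by omega)]
        simp only [Polynomial.mem_support_iff]
        rcases hval n with h0 | h0 <;> rcases hval (n + 1) with h1 | h1 <;>
          simp only [h0, h1] at hc ⊢ <;> simp [hc]
    exact fun n => htop (c + D.natDegree) n (by omega)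
  intro i
  have hci := hcoeff i
  have hflip : D.coeff i ≠ 0 → D.coeff i = 2 * h i - 1 := by
    rcases hval i with h0 | h0 <;> rcases hval (i - 1) with h1 | h1 <;>
      split_ifs at hci <;> omega
  refine ⟨?_, fun hne => (hflip hne).trans (hsign i).symm⟩
  rcases hval i with h0 | h0 <;> rcases hval (i - 1) with h1 | h1 <;>
    split_ifs at hci <;> simp [hci, h0, h1]

theorem one_sub_X_mul_indicatorSeries_univ :
    (1 - PowerSeries.X) * indicatorSeries Set.univ = 1 := by
  ext n
  rw [coeff_one_sub_X_mul_indicatorSeries]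
  rcases n with _ | n <;> simp [PowerSeries.coeff_one]

theorem indicatorSeries_coe_finset (G : Finset ℕ) :
    indicatorSeries G = ((∑ g ∈ G, X ^ g : ℤ[X]) : PowerSeries ℤ) := by
  classical
  ext n
  simp [Polynomial.coeff_X_pow, Set.indicator_apply]

theorem eq_one_add_sum_of_coe_eq {Γ : Set ℕ} {G : Finset ℕ} (hG : ∀ n, n ∈ G ↔ n ∉ Γ) {D : ℤ[X]}
    (hD : (D : PowerSeries ℤ) = (1 - PowerSeries.X) * indicatorSeries Γ) :
    D = 1 + ∑ g ∈ G, X ^ g * (X - 1) := by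
  have hsplit : indicatorSeries Γ = indicatorSeries Set.univ - indicatorSeries G := by
    ext n
    by_cases hn : n ∈ Γ <;> simp [hn, hG]
  apply Polynomial.coe_injective
  rw [hD, hsplit, mul_sub, one_sub_X_mul_indicatorSeries_univ, indicatorSeries_coe_finset,
    ← Finset.sum_mul]
  push_cast
  ring

section ResidueClasses

open Finset

variable {a : ℕ} {G : Finset ℕ}

theorem Finset.sub_mul_mem_of_sub_mem (hdown : ∀ g ∈ G, a ≤ g → g - a ∈ G) {g : ℕ} (hg : g ∈ G)
    (k : ℕ) (hk : k * a ≤ g) : g - k * a ∈ G := by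
  induction k with
  | zero => simpa using hg
  | succ k ih =>
    rw [add_one_mul, ← Nat.sub_sub]
    exact hdown _ (ih (by nlinarith)) (by rw [add_one_mul] at hk; omega)

theorem Finset.filter_mod_eq_image_range (hdown : ∀ g ∈ G, a ≤ g → g - a ∈ G)
    {r : ℕ} (hr : r ∈ G) (hra : r < a) :
    G.filter (· % a = r)
      = (range ((G.filter (· % a = r)).sup (· / a) + 1)).image (r + · * a) := by
  have hrr : r % a = r := Nat.mod_eq_of_lt hra
  obtain ⟨top, htop, htop_eq⟩ := Finset.exists_mem_eq_sup (G.filter (· % a = r))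
    ⟨r, Finset.mem_filter.mpr ⟨hr, hrr⟩⟩ (· / a)
  rw [Finset.mem_filter] at htop
  ext g
  simp only [Finset.mem_filter, Finset.mem_image, Finset.mem_range, Nat.lt_succ_iff]
  constructor
  · rintro ⟨hg, hgr⟩
    refine ⟨g / a, Finset.le_sup (f := (· / a)) (Finset.mem_filter.mpr ⟨hg, hgr⟩), ?_⟩
    rw [← hgr, Nat.mod_add_div']
  · rintro ⟨j, hj, rfl⟩
    rw [htop_eq] at hj
    refine ⟨?_, by rw [Nat.add_mul_mod_self_right, hrr]⟩
    have htop_rep : r + top / a * a = top := by rw [← htop.2, Nat.mod_add_div']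
    have hsplit : (top / a - j) * a + j * a = top / a * a := by
      rw [← add_mul, Nat.sub_add_cancel hj]
    have := Finset.sub_mul_mem_of_sub_mem hdown htop.1 (top / a - j) (by omega)
    rwa [show top - (top / a - j) * a = r + j * a by omega] at this

theorem Finset.exists_sum_eq_sum_range {M : Type*} [AddCommMonoid M] (R : Finset ℕ)
    (f : ℕ → M) : ∃ r : ℕ → ℕ, (∀ i < #R, r i ∈ R) ∧ (∀ i < #R, ∀ j < #R, i ≠ j → r i ≠ r j) ∧
      ∑ x ∈ R, f x = ∑ i ∈ range #R, f (r i) := by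
  set e := R.orderEmbOfFin rfl
  refine ⟨fun i => if h : i < #R then e ⟨i, h⟩ else 0, fun i hi => by simp [hi, e],
    fun i hi j hj hij => by simpa [hi, hj, Fin.ext_iff] using hij, ?_⟩
  calc ∑ x ∈ R, f x = ∑ x ∈ univ.map e.toEmbedding, f x := by rw [R.map_orderEmbOfFin_univ rfl]
    _ = ∑ i : Fin #R, f (e i) := Finset.sum_map _ _ _
    _ = _ := by rw [← Fin.sum_univ_eq_sum_range]; simp

theorem Finset.sum_eq_sum_residue_progressions {M : Type*} [AddCommMonoid M] (ha : 0 < a)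
    (hdown : ∀ g ∈ G, a ≤ g → g - a ∈ G) (F : ℕ → M) :
    ∃ (m : ℕ) (r n : ℕ → ℕ), (∀ i < m, r i ∈ G ∧ r i < a) ∧
      (∀ i < m, ∀ j < m, i ≠ j → r i ≠ r j) ∧
      ∑ g ∈ G, F g = ∑ i ∈ range m, ∑ j ∈ range (n i + 1), F (r i + j * a) := by
  set R := G.filter (· < a)
  set N : ℕ → ℕ := fun r => (G.filter (· % a = r)).sup (· / a)
  have hmod : ∀ g ∈ G, g % a ∈ R := fun g hg => Finset.mem_filter.mpr
    ⟨by simpa [← Nat.mod_eq_sub_div_mul] using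
        G.sub_mul_mem_of_sub_mem hdown hg (g / a) (Nat.div_mul_le_self g a),
      Nat.mod_lt g ha⟩
  have hfiber : ∀ r ∈ R,
      ∑ g ∈ G.filter (· % a = r), F g = ∑ j ∈ range (N r + 1), F (r + j * a) := by
    intro r hr
    rw [Finset.mem_filter] at hr
    rw [G.filter_mod_eq_image_range hdown hr.1 hr.2, Finset.sum_image fun i _ j _ hij =>
      Nat.eq_of_mul_eq_mul_right ha (Nat.add_left_cancel hij)]
  obtain ⟨r, hrR, hr_inj, hsum⟩ :=
    R.exists_sum_eq_sum_range fun r => ∑ j ∈ range (N r + 1), F (r + j * a)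
  refine ⟨#R, r, fun i => N (r i), fun i hi => Finset.mem_filter.mp (hrR i hi), hr_inj, ?_⟩
  rw [← Finset.sum_fiberwise_of_maps_to hmod, Finset.sum_congr rfl hfiber, hsum]

end ResidueClasses

theorem AddSubmonoid.exists_finset_compl {S : AddSubmonoid ℕ} {c : ℕ} (hS : ∀ n, c ≤ n → n ∈ S) :
    ∃ G : Finset ℕ, ∀ n, n ∈ G ↔ n ∉ S := by
  classical
  exact ⟨(Finset.range c).filter (· ∉ S), fun n => by
    simpa using fun hn => (lt_of_not_ge fun hcn => hn (hS n hcn))⟩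

theorem exists_eq_one_add_sum_residue_progressions {S : AddSubmonoid ℕ} {a c : ℕ}
    (hS : ∀ n, c ≤ n → n ∈ S) (ha : 0 < a) (haS : a ∈ S) {D : ℤ[X]}
    (hD : (D : PowerSeries ℤ) = (1 - PowerSeries.X) * indicatorSeries S) :
    ∃ (m : ℕ) (r n : ℕ → ℕ), (∀ i < m, 0 < r i ∧ r i < a) ∧
      (∀ i < m, ∀ j < m, i ≠ j → r i ≠ r j) ∧
      D = 1 + ∑ i ∈ Finset.range m, ∑ j ∈ Finset.range (n i + 1), X ^ (r i + j * a) * (X - 1) := by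
  obtain ⟨G, hG⟩ := AddSubmonoid.exists_finset_compl hS
  have hdown : ∀ g ∈ G, a ≤ g → g - a ∈ G := fun g hg hag => (hG _).mpr fun hga =>
    (hG g).mp hg (by simpa [Nat.sub_add_cancel hag] using S.add_mem hga haS)
  obtain ⟨m, r, n, hr, hr_inj, hsum⟩ :=
    G.sum_eq_sum_residue_progressions ha hdown fun g => (X ^ g * (X - 1) : ℤ[X])
  refine ⟨m, r, n, fun i hi => ⟨Nat.pos_of_ne_zero fun h0 => ?_, (hr i hi).2⟩, hr_inj, ?_⟩
  · exact (hG _).mp (h0 ▸ (hr i hi).1) S.zero_mem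
  · rw [eq_one_add_sum_of_coe_eq hG hD, hsum]

def semigroupTower (p a : ℕ → ℕ) : ℕ → AddSubmonoid ℕ
  | 0 => ⊤
  | l + 1 => extendSemigroup (p (l + 1)) (a (l + 1)) (semigroupTower p a l)

section semigroupTower

variable {s : ℕ} {p a : ℕ → ℕ}

theorem mem_semigroupTower_of_le (hp : ∀ k, 1 ≤ k → k ≤ s → 0 < p k)
    (hcop : ∀ k, 1 ≤ k → k ≤ s → Nat.Coprime (p k) (a k))
    (hgrow : ∀ k, 1 ≤ k → k + 1 ≤ s → p (k + 1) * p k * a k ≤ a (k + 1)) :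
    ∀ l, 1 ≤ l → l ≤ s → ∀ n, p l * a l ≤ n → n ∈ semigroupTower p a l
  | l + 1, _, hls, n, hn => by
    have hP := hp (l + 1) (by omega) hls
    have hsub := Nat.sub_one_mul (p (l + 1)) (a (l + 1))
    have hle : a (l + 1) ≤ p (l + 1) * a (l + 1) := Nat.le_mul_of_pos_left _ hP
    rcases Nat.eq_zero_or_pos l with rfl | hl
    · exact mem_extendSemigroup_of_le (c := 0) hP (hcop 1 le_rfl hls)
        (fun _ _ => AddSubmonoid.mem_top _) (by rw [mul_zero, zero_add, hsub]; omega)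
    · have hg := hgrow l hl hls
      rw [mul_assoc] at hg
      exact mem_extendSemigroup_of_le hP (hcop (l + 1) (by omega) hls)
        (mem_semigroupTower_of_le hp hcop hgrow l hl (by omega)) (by omega)

theorem coe_eq_one_sub_X_mul_indicatorSeries_semigroupTower {Δ : ℕ → ℤ[X]}
    (hp : ∀ k, 1 ≤ k → k ≤ s → 0 < p k) (ha : ∀ k, 1 ≤ k → k ≤ s → 0 < a k)
    (hcop : ∀ k, 1 ≤ k → k ≤ s → Nat.Coprime (p k) (a k))
    (hgrow : ∀ k, 1 ≤ k → k + 1 ≤ s → p (k + 1) * p k * a k ≤ a (k + 1))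
    (hΔ1 : Δ 1 * ((X ^ p 1 - 1) * (X ^ a 1 - 1)) = (X ^ (p 1 * a 1) - 1) * (X - 1))
    (hΔrec : ∀ l, 2 ≤ l → l ≤ s →
      Δ l * ((X ^ p l - 1) * (X ^ a l - 1))
        = (X ^ (p l * a l) - 1) * (X - 1) * ((Δ (l - 1)).comp (X ^ p l))) :
    ∀ l, 1 ≤ l → l ≤ s →
      (Δ l : PowerSeries ℤ) = (1 - PowerSeries.X) * indicatorSeries (semigroupTower p a l)
  | l + 1, _, hls => by
    have hP := (hp (l + 1) (by omega) hls).ne'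
    have hA := (ha (l + 1) (by omega) hls).ne'
    have hC := hcop (l + 1) (by omega) hls
    rcases Nat.eq_zero_or_pos l with rfl | hl
    · refine coe_eq_one_sub_X_mul_indicatorSeries_extendSemigroup hP hA hC
        (AddSubmonoid.mem_top _) (D' := 1) ?_ (by rwa [one_comp, mul_one])
      rw [Polynomial.coe_one, AddSubmonoid.coe_top, one_sub_X_mul_indicatorSeries_univ]
    · have haS : a (l + 1) ∈ semigroupTower p a l :=
        mem_semigroupTower_of_le hp hcop hgrow l hl (by omega) _ <|
          (Nat.le_mul_of_pos_left _ (hp (l + 1) (by omega) hls)).trans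
            (by simpa [mul_assoc] using hgrow l hl hls)
      exact coe_eq_one_sub_X_mul_indicatorSeries_extendSemigroup hP hA hC haS
        (coe_eq_one_sub_X_mul_indicatorSeries_semigroupTower hp ha hcop hgrow hΔ1 hΔrec l hl
          (by omega)) (by simpa using hΔrec (l + 1) (by omega) hls)

end semigroupTower

/-- The characteristic polynomials `Δ_l` of an irreducible plane curve singularity,
defined recursively by `Δ_1 = (t^{p_1 a_1}-1)(t-1)/((t^{p_1}-1)(t^{a_1}-1))` and
`Δ_l(t) = (t^{p_l a_l}-1)(t-1)/((t^{p_l}-1)(t^{a_l}-1)) · Δ_{l-1}(t^{p_l})`,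
have alternating coefficients, and admit the semigroup form
`Δ_l = 1 + Σ_i Σ_{j=0}^{n_i} t^{r_i + j a_l}(t-1)` with distinct residues
`0 < r_i < a_l`. -/
theorem characteristic_poly_alternating (s : ℕ) (p a : ℕ → ℕ) (Δ : ℕ → Polynomial ℤ)
    (hp : ∀ k, 1 ≤ k → k ≤ s → 2 ≤ p k)
    (ha : ∀ k, 1 ≤ k → k ≤ s → 2 ≤ a k)
    (hcop : ∀ k, 1 ≤ k → k ≤ s → Nat.Coprime (p k) (a k))
    (harec : ∀ k, 1 ≤ k → k + 1 ≤ s → ∃ q, 2 ≤ q ∧ Nat.Coprime q (p (k + 1)) ∧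
        a (k + 1) = q + p (k + 1) * p k * a k)
    (hΔ1 : Δ 1 * ((X ^ p 1 - 1) * (X ^ a 1 - 1)) = (X ^ (p 1 * a 1) - 1) * (X - 1))
    (hΔrec : ∀ l, 2 ≤ l → l ≤ s →
      Δ l * ((X ^ p l - 1) * (X ^ a l - 1))
        = (X ^ (p l * a l) - 1) * (X - 1) * ((Δ (l - 1)).comp (X ^ p l))) :
    ∀ l, 1 ≤ l → l ≤ s → AlternatingCoeffs (Δ l) ∧
      ∃ (m : ℕ) (r n : ℕ → ℕ),
        (∀ i < m, 0 < r i ∧ r i < a l) ∧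
        (∀ i < m, ∀ j < m, i ≠ j → r i ≠ r j) ∧
        Δ l = 1 + ∑ i ∈ Finset.range m, ∑ j ∈ Finset.range (n i + 1),
          X ^ (r i + j * a l) * (X - 1) := by
  have hp0 : ∀ k, 1 ≤ k → k ≤ s → 0 < p k := fun k hk hks => by linarith [hp k hk hks]
  have ha0 : ∀ k, 1 ≤ k → k ≤ s → 0 < a k := fun k hk hks => by linarith [ha k hk hks]
  have hgrow : ∀ k, 1 ≤ k → k + 1 ≤ s → p (k + 1) * p k * a k ≤ a (k + 1) := fun k hk hks => by
    obtain ⟨q, -, -, hq⟩ := harec k hk hks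
    omega
  rintro (_ | l) hl hls
  · omega
  have hcond := mem_semigroupTower_of_le hp0 hcop hgrow (l + 1) hl hls
  have hD := coe_eq_one_sub_X_mul_indicatorSeries_semigroupTower hp0 ha0 hcop hgrow hΔ1 hΔrec
    (l + 1) hl hls
  exact ⟨alternatingCoeffs_of_coe_eq hcond hD, exists_eq_one_add_sum_residue_progressions hcond
    (ha0 _ hl hls) self_mem_extendSemigroup hD⟩
end

section
/- Let gcd(p,a) = 1 and let h = gcd(p, m), h̃ = gcd(a, m) for a positive integer m, with (h−1)(h̃−1) = 0. Define Δ♮(t) = (1/(a^{h-1} p^{h̃-1})) · t^{−(a−1)(p−1)/2} · (t^{pa/(hh̃)}−1)^{hh̃}(t−1) / ((t^{p/h}−1)^h (t^{a/h̃}−1)^{h̃}). Then (Δ♮)''(1) = (1/12)(a²/h̃ − 1)(p²/h − 1). -/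
/-!
With `G_b = 1 + t + ⋯ + t^(b-1)`, the hypothesis on `P` says (for `h = 1`; the case `h̃ = 1` is
symmetric) that `p^(h̃-1) · P · G_p = G_p(t^r)^h̃`, where `a = h̃ r`. View a polynomial `Q` with
`Q(1) ≠ 0` as a generating function with mean `μ Q = Q'(1)/Q(1)` and variance
`σ Q = Q''(1)/Q(1) + μ Q - (μ Q)²`. Both are additive under products, get multiplied by `r`
resp. `r²` under `t ↦ t^r`, and equal `(b-1)/2` resp. `(b²-1)/12` for `G_b`. Hence `P(1) = 1`,
`μ P = (a-1)(p-1)/2` is exactly the exponent of the normalising power of `t`, and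
`σ P = (h̃ r² - 1)(p² - 1)/12`. Finally, when `N = μ P`, the second derivative of `P(t)/t^N`
at `1` is `P(1) · σ P`.
-/

open Polynomial Finset

theorem Nat.Coprime.two_dvd_sub_one_mul_sub_one {a b : ℕ} (h : Nat.Coprime a b) :
    2 ∣ (b - 1) * (a - 1) := by
  have not_both_even : ¬ (2 ∣ a ∧ 2 ∣ b) := fun ⟨ha, hb⟩ => by simpa [h] using Nat.dvd_gcd ha hb
  rcases (by omega : 2 ∣ b - 1 ∨ 2 ∣ a - 1) with hb | ha
  · exact hb.mul_right _
  · exact ha.mul_left _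

namespace Polynomial

variable {K : Type*} [Field K]

noncomputable def pgfMean (Q : K[X]) : K :=
  Q.derivative.eval 1 / Q.eval 1

noncomputable def pgfVariance (Q : K[X]) : K :=
  Q.derivative.derivative.eval 1 / Q.eval 1 + pgfMean Q - pgfMean Q ^ 2

@[simp] lemma pgfMean_C (c : K) : pgfMean (C c) = 0 := by simp [pgfMean]

@[simp] lemma pgfVariance_C (c : K) : pgfVariance (C c) = 0 := by simp [pgfVariance]

@[simp] lemma pgfMean_one : pgfMean (1 : K[X]) = 0 := by simpa using pgfMean_C (1 : K)

@[simp] lemma pgfVariance_one : pgfVariance (1 : K[X]) = 0 := by simpa using pgfVariance_C (1 : K)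

variable {A B : K[X]}

lemma pgfMean_mul (hA : A.eval 1 ≠ 0) (hB : B.eval 1 ≠ 0) :
    pgfMean (A * B) = pgfMean A + pgfMean B := by
  simp only [pgfMean, derivative_mul, eval_add, eval_mul]
  field_simp

lemma pgfVariance_mul (hA : A.eval 1 ≠ 0) (hB : B.eval 1 ≠ 0) :
    pgfVariance (A * B) = pgfVariance A + pgfVariance B := by
  simp only [pgfVariance, pgfMean_mul hA hB]
  simp only [pgfMean, derivative_mul, derivative_add, eval_add, eval_mul]
  field_simp
  ring

lemma pgfMean_pow (hA : A.eval 1 ≠ 0) (k : ℕ) : pgfMean (A ^ k) = k * pgfMean A := by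
  induction k with
  | zero => simp
  | succ k ih =>
    rw [pow_succ, pgfMean_mul (by simpa using pow_ne_zero k hA) hA, ih]
    push_cast
    ring

lemma pgfVariance_pow (hA : A.eval 1 ≠ 0) (k : ℕ) :
    pgfVariance (A ^ k) = k * pgfVariance A := by
  induction k with
  | zero => simp
  | succ k ih =>
    rw [pow_succ, pgfVariance_mul (by simpa using pow_ne_zero k hA) hA, ih]
    push_cast
    ring

lemma eval_one_derivative_derivative_X_pow (n : ℕ) :
    (derivative (derivative (X ^ n : K[X]))).eval 1 = n * (n - 1) := by
  cases n <;> simp [derivative_X_pow]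

lemma pgfMean_comp_X_pow (Q : K[X]) (r : ℕ) : pgfMean (Q.comp (X ^ r)) = r * pgfMean Q := by
  simp [pgfMean, derivative_comp, derivative_X_pow, mul_div_assoc]

lemma pgfVariance_comp_X_pow (Q : K[X]) (r : ℕ) :
    pgfVariance (Q.comp (X ^ r)) = r ^ 2 * pgfVariance Q := by
  simp only [pgfVariance, pgfMean, derivative_comp, derivative_mul,
    eval_add, eval_mul, eval_comp, eval_one_derivative_derivative_X_pow]
  simp [derivative_X_pow]
  ring

variable [CharZero K]

lemma eval_one_derivative_geom_sum (b : ℕ) :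
    (derivative (∑ i ∈ range b, X ^ i : K[X])).eval 1 = b * (b - 1) / 2 := by
  induction b with
  | zero => simp
  | succ b ih =>
    rw [sum_range_succ, derivative_add, eval_add, ih]
    simp [derivative_X_pow]
    ring

lemma eval_one_derivative_derivative_geom_sum (b : ℕ) :
    (derivative (derivative (∑ i ∈ range b, X ^ i : K[X]))).eval 1
      = b * (b - 1) * (b - 2) / 3 := by
  induction b with
  | zero => simp
  | succ b ih =>
    rw [sum_range_succ, derivative_add, derivative_add, eval_add, ih,
      eval_one_derivative_derivative_X_pow]
    push_cast
    ring

lemma pgfMean_geom_sum {b : ℕ} (hb : b ≠ 0) :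
    pgfMean (∑ i ∈ range b, X ^ i : K[X]) = (b - 1) / 2 := by
  have : (b : K) ≠ 0 := by exact_mod_cast hb
  rw [pgfMean, eval_one_derivative_geom_sum, eval_geom_sum, one_geom_sum]
  field_simp

lemma pgfVariance_geom_sum {b : ℕ} (hb : b ≠ 0) :
    pgfVariance (∑ i ∈ range b, X ^ i : K[X]) = (b ^ 2 - 1) / 12 := by
  have : (b : K) ≠ 0 := by exact_mod_cast hb
  rw [pgfVariance, pgfMean_geom_sum hb, eval_one_derivative_derivative_geom_sum]
  rw [eval_geom_sum, one_geom_sum]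
  field_simp
  ring

variable {𝕜 : Type*} [NontriviallyNormedField 𝕜]

lemma hasDerivAt_eval_div_pow (Q : 𝕜[X]) (N : ℕ) {t : 𝕜} (ht : t ≠ 0) :
    HasDerivAt (fun s => Q.eval s / s ^ N)
      ((X * derivative Q - C (N : 𝕜) * Q).eval t / t ^ (N + 1)) t := by
  refine ((Q.hasDerivAt t).fun_div (hasDerivAt_pow N t) (pow_ne_zero N ht)).congr_deriv ?_
  simp only [eval_sub, eval_mul, eval_X, eval_C]
  cases N with
  | zero => simp [ht]
  | succ n =>
    rw [Nat.add_sub_cancel]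
    field_simp
    ring

lemma iteratedDeriv_two_eval_div_pow_at_one (Q : 𝕜[X]) (N : ℕ) :
    iteratedDeriv 2 (fun t => Q.eval t / t ^ N) 1
      = (derivative (derivative Q)).eval 1 - 2 * N * (derivative Q).eval 1
        + N * (N + 1) * Q.eval 1 := by
  have hderiv : deriv (fun t => Q.eval t / t ^ N)
      =ᶠ[nhds 1] fun t => (X * derivative Q - C (N : 𝕜) * Q).eval t / t ^ (N + 1) := by
    filter_upwards [isOpen_ne.mem_nhds one_ne_zero] with t ht
    exact (hasDerivAt_eval_div_pow Q N ht).deriv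
  rw [iteratedDeriv_succ, iteratedDeriv_one, hderiv.deriv_eq,
    (hasDerivAt_eval_div_pow _ _ one_ne_zero).deriv]
  simp only [derivative_sub, derivative_mul, derivative_X, derivative_C, eval_sub, eval_add,
    eval_mul, eval_X, eval_C, eval_one, eval_zero]
  push_cast
  ring

lemma iteratedDeriv_two_eval_div_pow_at_one_of_pgfMean (Q : 𝕜[X]) {N : ℕ}
    (hQ : Q.eval 1 ≠ 0) (hN : pgfMean Q = N) :
    iteratedDeriv 2 (fun t => Q.eval t / t ^ N) 1 = Q.eval 1 * pgfVariance Q := by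
  rw [iteratedDeriv_two_eval_div_pow_at_one, pgfVariance, hN]
  rw [pgfMean, div_eq_iff hQ] at hN
  field_simp
  linear_combination -2 * (N : 𝕜) * hN

lemma geom_sum_comp_X_pow_mul {R : Type*} [CommRing R] (b r : ℕ) :
    (∑ i ∈ range b, X ^ i : R[X]).comp (X ^ r) * (X ^ r - 1) = X ^ (r * b) - 1 := by
  simpa [mul_comp, sub_comp, X_pow_comp, ← pow_mul] using
    congrArg (·.comp (X ^ r)) (geom_sum_mul (X : R[X]) b)

lemma mul_geom_sum_eq_of_mul_X_pow_sub_one {R : Type*} [CommRing R] [IsDomain R]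
    {b k r : ℕ} (hr : r ≠ 0) {c : R} {P : R[X]}
    (hP : C c * (P * ((X ^ r - 1) ^ k * (X ^ b - 1))) = (X ^ (r * b) - 1) ^ k * (X - 1)) :
    C c * (P * ∑ i ∈ range b, X ^ i) = (∑ i ∈ range b, X ^ i : R[X]).comp (X ^ r) ^ k := by
  have hne : ((X ^ r - 1) ^ k * (X - 1) : R[X]) ≠ 0 :=
    mul_ne_zero (pow_ne_zero _ (C_1 (R := R) ▸ X_pow_sub_C_ne_zero (Nat.pos_of_ne_zero hr) 1))
      (C_1 (R := R) ▸ X_sub_C_ne_zero 1)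
  refine mul_right_cancel₀ hne ?_
  rw [← geom_sum_comp_X_pow_mul, mul_pow, ← geom_sum_mul X b] at hP
  linear_combination hP

variable [CharZero 𝕜]

lemma iteratedDeriv_two_eval_div_pow_at_one_of_mul_X_pow_sub_one {b k r N : ℕ}
    (hb : b ≠ 0) (hk : k ≠ 0) (hr : r ≠ 0) (hN : 2 * N = (b - 1) * (k * r - 1)) {P : 𝕜[X]}
    (hP : C ((b : 𝕜) ^ (k - 1)) * (P * ((X ^ r - 1) ^ k * (X ^ b - 1)))
      = (X ^ (r * b) - 1) ^ k * (X - 1)) :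
    iteratedDeriv 2 (fun t => P.eval t / t ^ N) 1 = (k * r ^ 2 - 1) * (b ^ 2 - 1) / 12 := by
  have hGr := mul_geom_sum_eq_of_mul_X_pow_sub_one hr hP
  set G : 𝕜[X] := ∑ i ∈ range b, X ^ i
  have hb' : (b : 𝕜) ≠ 0 := by exact_mod_cast hb
  have hG1 : G.eval 1 = b := by rw [eval_geom_sum, one_geom_sum]
  have hP1 : P.eval 1 = 1 := by
    have h := congrArg (eval 1) hGr
    simp only [eval_mul, eval_C, eval_pow, eval_comp, eval_X, one_pow, hG1] at h
    rw [← Nat.sub_add_cancel (Nat.one_le_iff_ne_zero.mpr hk), pow_succ] at h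
    simpa [hb'] using h
  have hC1 : (C ((b : 𝕜) ^ (k - 1))).eval 1 ≠ 0 := by simp [hb']
  have hP1' : P.eval 1 ≠ 0 := by simp [hP1]
  have hG1' : G.eval 1 ≠ 0 := by simp [hG1, hb']
  have hPG : (P * G).eval 1 ≠ 0 := by simp [hP1, hG1, hb']
  have hGr1 : (G.comp (X ^ r)).eval 1 ≠ 0 := by simp [hG1, hb']
  have hmean := congrArg pgfMean hGr
  rw [pgfMean_mul hC1 hPG, pgfMean_mul hP1' hG1', pgfMean_pow hGr1, pgfMean_comp_X_pow,
    pgfMean_geom_sum hb, pgfMean_C] at hmean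
  have hvar := congrArg pgfVariance hGr
  rw [pgfVariance_mul hC1 hPG, pgfVariance_mul hP1' hG1', pgfVariance_pow hGr1,
    pgfVariance_comp_X_pow, pgfVariance_geom_sum hb, pgfVariance_C] at hvar
  have hN' : (N : 𝕜) = (b - 1) * (k * r - 1) / 2 := by
    have h1 : 1 ≤ b := Nat.one_le_iff_ne_zero.mpr hb
    have h2 : 1 ≤ k * r := Nat.one_le_iff_ne_zero.mpr (mul_ne_zero hk hr)
    have := congrArg (Nat.cast : ℕ → 𝕜) hN
    push_cast [h1, h2] at this
    linear_combination this / 2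
  rw [iteratedDeriv_two_eval_div_pow_at_one_of_pgfMean P hP1'
    (by rw [hN']; linear_combination hmean), hP1, one_mul]
  linear_combination hvar

lemma iteratedDeriv_two_eval_div_pow_at_one_of_coprime {b c k : ℕ} (hb : b ≠ 0) (hc : c ≠ 0)
    (hbc : Nat.Coprime b c) (hkc : k ∣ c) {P : 𝕜[X]}
    (hP : C ((b : 𝕜) ^ (k - 1)) * (P * ((X ^ (c / k) - 1) ^ k * (X ^ b - 1)))
      = (X ^ (b * c / k) - 1) ^ k * (X - 1)) :
    iteratedDeriv 2 (fun t => P.eval t / t ^ ((c - 1) * (b - 1) / 2)) 1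
      = 1 / 12 * ((c : 𝕜) ^ 2 / k - 1) * ((b : 𝕜) ^ 2 - 1) := by
  obtain ⟨r, rfl⟩ := hkc
  have hk : k ≠ 0 := left_ne_zero_of_mul hc
  have hr : r ≠ 0 := right_ne_zero_of_mul hc
  rw [Nat.mul_div_cancel_left r (Nat.pos_of_ne_zero hk),
    show b * (k * r) = k * (r * b) by ring, Nat.mul_div_cancel_left _ (Nat.pos_of_ne_zero hk)] at hP
  rw [iteratedDeriv_two_eval_div_pow_at_one_of_mul_X_pow_sub_one hb hk hr
    (by rw [Nat.mul_div_cancel' hbc.two_dvd_sub_one_mul_sub_one, mul_comm]) hP]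
  have hk' : (k : 𝕜) ≠ 0 := by exact_mod_cast hk
  push_cast
  field_simp

end Polynomial

theorem brieskorn_normalized_alexander_second_deriv_general (p a m h ht : ℕ)
    (hp : 2 ≤ p) (ha : 2 ≤ a) (hcop : Nat.Coprime p a)
    (hh : h = Nat.gcd p m) (hht : ht = Nat.gcd a m)
    (hone : (h - 1) * (ht - 1) = 0)
    (P : Polynomial ℂ)
    (hP : C ((a : ℂ) ^ (h - 1) * (p : ℂ) ^ (ht - 1)) *
        (P * ((X ^ (p / h) - 1) ^ h * (X ^ (a / ht) - 1) ^ ht))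
        = (X ^ (p * a / (h * ht)) - 1) ^ (h * ht) * (X - 1)) :
    iteratedDeriv 2 (fun t : ℂ => P.eval t / t ^ ((a - 1) * (p - 1) / 2)) 1
      = (1 / 12 : ℂ) * ((a : ℂ) ^ 2 / (ht : ℂ) - 1) * ((p : ℂ) ^ 2 / (h : ℂ) - 1) := by
  have hh0 : h ≠ 0 := hh ▸ (Nat.gcd_pos_of_pos_left m (by omega)).ne'
  have hht0 : ht ≠ 0 := hht ▸ (Nat.gcd_pos_of_pos_left m (by omega)).ne'
  rcases Nat.mul_eq_zero.mp hone with h1 | h1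
  · obtain rfl : h = 1 := by omega
    simp only [Nat.sub_self, pow_zero, one_mul, Nat.div_one, pow_one, Nat.cast_one, div_one]
      at hP ⊢
    rw [iteratedDeriv_two_eval_div_pow_at_one_of_coprime (by omega) (by omega) hcop
      (hht ▸ Nat.gcd_dvd_left a m) (by linear_combination hP)]
  · obtain rfl : ht = 1 := by omega
    simp only [Nat.sub_self, pow_zero, mul_one, Nat.div_one, pow_one, Nat.cast_one, div_one]
      at hP ⊢
    rw [mul_comm (a - 1), iteratedDeriv_two_eval_div_pow_at_one_of_coprime (by omega) (by omega)
      hcop.symm (hh ▸ Nat.gcd_dvd_left p m) (by rw [mul_comm a p]; linear_combination hP)]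
    ring

/-- Second derivative at 1 of the normalized Alexander polynomial
`Δ♮(t) = (1/(a^{h-1} p^{h̃-1})) t^{-(a-1)(p-1)/2} (t^{pa/(hh̃)}-1)^{hh̃}(t-1) /
((t^{p/h}-1)^h (t^{a/h̃}-1)^{h̃})` of the link of `x^p + y^a + z^m`.
Here `P` is the polynomial `t^{(a-1)(p-1)/2} Δ♮(t)`, characterized by the stated
polynomial identity, and `(Δ♮)''(1) = (1/12)(a²/h̃ − 1)(p²/h − 1)`. -/
theorem brieskorn_normalized_alexander_second_deriv (p a m h ht : ℕ)
    (hp : 2 ≤ p) (ha : 2 ≤ a) (hcop : Nat.Coprime p a) (hm : 0 < m)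
    (hh : h = Nat.gcd p m) (hht : ht = Nat.gcd a m)
    (hone : (h - 1) * (ht - 1) = 0)
    (P : Polynomial ℂ)
    (hP : C ((a : ℂ) ^ (h - 1) * (p : ℂ) ^ (ht - 1)) *
        (P * ((X ^ (p / h) - 1) ^ h * (X ^ (a / ht) - 1) ^ ht))
        = (X ^ (p * a / (h * ht)) - 1) ^ (h * ht) * (X - 1)) :
    iteratedDeriv 2 (fun t : ℂ => P.eval t / t ^ ((a - 1) * (p - 1) / 2)) 1
      = (1 / 12 : ℂ) * ((a : ℂ) ^ 2 / (ht : ℂ) - 1) * ((p : ℂ) ^ 2 / (h : ℂ) - 1) :=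
  brieskorn_normalized_alexander_second_deriv_general p a m h ht hp ha hcop hh hht hone P hP
end

section
/- Suppose Laurent polynomials satisfy Δ_l♮(t) = B_l♮(t) · [Δ_{l-1}♮(t^{p_l/h_l})]^{h_l} where each factor takes value 1 at t=1 and has vanishing first derivative at t=1, and (B_l♮)''(1) = (1/12)(a_l²/h̃_l − 1)(p_l²/h_l − 1). Then (Δ_l♮)''(1) = (1/12)(a_l²/h̃_l − 1)(p_l²/h_l − 1) + (p_l²/h_l)·(Δ_{l-1}♮)''(1), and consequently (Δ_s♮)''(1) = Σ_{k=1}^s (1/12)(a_k²/h̃_k − 1)(p_k²/h_k − 1) · (p_{k+1}⋯p_s)²/(h_{k+1}⋯h_s). -/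
/-!
At `t = 1` every factor equals `1` and has vanishing derivative, so all cross terms drop out of
the second derivative: `(F·G)'' = F'' + G''`, `(G^n)'' = n·G''` and `(G(t^q))'' = q²·G''`.
With `q = p_l/h_l` and `n = h_l` the coefficient is `h_l (p_l/h_l)² = p_l²/h_l`, and unrolling the
linear recursion `x_l = c_l + r_l x_{l-1}` from `x_0 = 0` gives the closed sum.
-/

open Finset

section SecondDerivative

variable {𝕜 𝔸 : Type*} [NontriviallyNormedField 𝕜] [NormedCommRing 𝔸] [NormedAlgebra 𝕜 𝔸]
  {x : 𝕜}

theorem iteratedDeriv_two_mul {f g : 𝕜 → 𝔸} (hf : ContDiffAt 𝕜 2 f x) (hg : ContDiffAt 𝕜 2 g x) :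
    iteratedDeriv 2 (f * g) x =
      iteratedDeriv 2 f x * g x + 2 * deriv f x * deriv g x + f x * iteratedDeriv 2 g x := by
  rw [iteratedDeriv_mul hf hg]
  simp only [sum_range_succ, range_one, sum_singleton, Nat.reduceAdd, Nat.reduceSub,
    Nat.choose_zero_right, Nat.choose_succ_self_right, Nat.choose_self, Nat.cast_one,
    Nat.cast_ofNat, iteratedDeriv_zero, iteratedDeriv_one]
  ring

theorem iteratedDeriv_two_comp_of_deriv_eq_zero {f g : 𝕜 → 𝕜} (hg : ContDiffAt 𝕜 2 g (f x))
    (hf : ContDiffAt 𝕜 2 f x) (hg' : deriv g (f x) = 0) :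
    iteratedDeriv 2 (g ∘ f) x = iteratedDeriv 2 g (f x) * deriv f x ^ 2 := by
  rw [iteratedDeriv_comp_two hg hf, hg', zero_mul, add_zero]

theorem iteratedDeriv_two_pow_of_deriv_eq_zero {f : 𝕜 → 𝕜} (hf : ContDiffAt 𝕜 2 f x)
    (hf' : deriv f x = 0) (n : ℕ) :
    iteratedDeriv 2 (f ^ n) x = n * f x ^ (n - 1) * iteratedDeriv 2 f x := by
  have hpow : f ^ n = (· ^ n) ∘ f := rfl
  rw [hpow, iteratedDeriv_comp_two (by fun_prop) hf, hf', deriv_pow_field]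
  ring

theorem iteratedDeriv_two_mul_pow_comp_pow_at_one {F G : 𝕜 → 𝕜} (hF : ContDiff 𝕜 2 F)
    (hG : ContDiff 𝕜 2 G) (hF1 : F 1 = 1) (hG1 : G 1 = 1) (hF' : deriv F 1 = 0)
    (hG' : deriv G 1 = 0) (q n : ℕ) :
    iteratedDeriv 2 (fun t ↦ F t * G (t ^ q) ^ n) 1
      = iteratedDeriv 2 F 1 + n * q ^ 2 * iteratedDeriv 2 G 1 := by
  set Gq : 𝕜 → 𝕜 := G ∘ (· ^ q)
  have hGq : ContDiff 𝕜 2 Gq := hG.comp (contDiff_id.pow q)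
  have hGq1 : Gq 1 = 1 := by simp [Gq, hG1]
  have hGq' : deriv Gq 1 = 0 := by
    rw [deriv_comp _ (by simpa using hG.differentiable two_ne_zero 1) (by fun_prop)]
    simp [hG']
  have hGq2 : iteratedDeriv 2 Gq 1 = q ^ 2 * iteratedDeriv 2 G 1 := by
    rw [iteratedDeriv_two_comp_of_deriv_eq_zero (by simpa using hG.contDiffAt) (by fun_prop)
      (by simpa using hG'), deriv_pow_field]
    simp [mul_comm]
  have hPow' : deriv (Gq ^ n) 1 = 0 := by
    rw [deriv_pow (hGq.differentiable two_ne_zero 1), hGq', mul_zero]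
  have hPow2 : iteratedDeriv 2 (Gq ^ n) 1 = n * q ^ 2 * iteratedDeriv 2 G 1 := by
    rw [iteratedDeriv_two_pow_of_deriv_eq_zero hGq.contDiffAt hGq', hGq1, hGq2]
    ring
  have hprod : (fun t ↦ F t * G (t ^ q) ^ n) = F * Gq ^ n := rfl
  rw [hprod, iteratedDeriv_two_mul (g := Gq ^ n) hF.contDiffAt (hGq.pow n).contDiffAt, hF1, hF',
    hPow2]
  simp [hGq1]

end SecondDerivative

theorem eq_sum_mul_prod_of_recurrence {R : Type*} [CommSemiring R] {x c r : ℕ → R} {s : ℕ}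
    (h0 : x 0 = 0) (hrec : ∀ l, 1 ≤ l → l ≤ s → x l = c l + r l * x (l - 1)) :
    x s = ∑ k ∈ Icc 1 s, c k * ∏ j ∈ Icc (k + 1) s, r j := by
  induction s with
  | zero => simp [h0]
  | succ s ih =>
    rw [hrec (s + 1) (by omega) le_rfl, Nat.add_sub_cancel,
      ih fun l hl hls ↦ hrec l hl (by omega), sum_Icc_succ_top (by omega),
      Icc_eq_empty_of_lt (Nat.lt_succ_self (s + 1)), prod_empty, mul_one, mul_sum, add_comm]
    congr 1
    refine sum_congr rfl fun k hk ↦ ?_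
    rw [prod_Icc_succ_top (by grind)]
    ring

/-- Inductive formula for the second derivative at 1 of the normalized Alexander
polynomials `Δ_l♮(t) = B_l♮(t) · [Δ_{l-1}♮(t^{p_l/h_l})]^{h_l}`, and the resulting
closed formula for `(Δ_s♮)''(1)`. -/
theorem normalized_alexander_second_deriv_recursion (s : ℕ) (p a h ht : ℕ → ℕ)
    (hpos : ∀ k, 0 < p k ∧ 0 < a k ∧ 0 < h k ∧ 0 < ht k)
    (hdvd : ∀ k, h k ∣ p k ∧ ht k ∣ a k)
    (D B : ℕ → ℂ → ℂ)
    (hD0 : ∀ t, D 0 t = 1)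
    (hsmooth : ∀ l, ContDiff ℂ ⊤ (D l) ∧ ContDiff ℂ ⊤ (B l))
    (hrec : ∀ l, 1 ≤ l → l ≤ s → ∀ t, D l t = B l t * (D (l - 1) (t ^ (p l / h l))) ^ (h l))
    (hval : ∀ l, 1 ≤ l → l ≤ s →
      D l 1 = 1 ∧ B l 1 = 1 ∧ deriv (D l) 1 = 0 ∧ deriv (B l) 1 = 0)
    (hB2 : ∀ l, 1 ≤ l → l ≤ s →
      iteratedDeriv 2 (B l) 1
        = (1 / 12 : ℂ) * ((a l : ℂ) ^ 2 / (ht l : ℂ) - 1) * ((p l : ℂ) ^ 2 / (h l : ℂ) - 1)) :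
    (∀ l, 1 ≤ l → l ≤ s →
      iteratedDeriv 2 (D l) 1
        = (1 / 12 : ℂ) * ((a l : ℂ) ^ 2 / (ht l : ℂ) - 1) * ((p l : ℂ) ^ 2 / (h l : ℂ) - 1)
          + ((p l : ℂ) ^ 2 / (h l : ℂ)) * iteratedDeriv 2 (D (l - 1)) 1) ∧
    iteratedDeriv 2 (D s) 1
      = ∑ k ∈ Finset.Icc 1 s,
          (1 / 12 : ℂ) * ((a k : ℂ) ^ 2 / (ht k : ℂ) - 1) * ((p k : ℂ) ^ 2 / (h k : ℂ) - 1)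
            * (∏ j ∈ Finset.Icc (k + 1) s, (p j : ℂ)) ^ 2
            / (∏ j ∈ Finset.Icc (k + 1) s, (h j : ℂ)) := by
  have hD0const : D 0 = fun _ ↦ 1 := funext hD0
  have hprev : ∀ l, 1 ≤ l → l ≤ s → D (l - 1) 1 = 1 ∧ deriv (D (l - 1)) 1 = 0 := by
    intro l hl hls
    rcases hl.eq_or_lt with rfl | hl
    · simp [hD0const]
    · exact ⟨(hval _ (by omega) (by omega)).1, (hval _ (by omega) (by omega)).2.2.1⟩
  have step : ∀ l, 1 ≤ l → l ≤ s → iteratedDeriv 2 (D l) 1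
      = (1 / 12 : ℂ) * ((a l : ℂ) ^ 2 / (ht l : ℂ) - 1) * ((p l : ℂ) ^ 2 / (h l : ℂ) - 1)
        + ((p l : ℂ) ^ 2 / (h l : ℂ)) * iteratedDeriv 2 (D (l - 1)) 1 := by
    intro l hl hls
    obtain ⟨-, hB1, -, hB'⟩ := hval l hl hls
    obtain ⟨hD1, hD'⟩ := hprev l hl hls
    have hh : (h l : ℂ) ≠ 0 := Nat.cast_ne_zero.mpr (hpos l).2.2.1.ne'
    rw [funext (hrec l hl hls), iteratedDeriv_two_mul_pow_comp_pow_at_one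
      ((hsmooth l).2.of_le le_top) ((hsmooth (l - 1)).1.of_le le_top) hB1 hD1 hB' hD',
      hB2 l hl hls, Nat.cast_div (hdvd l).1 hh]
    field_simp
  refine ⟨step, ?_⟩
  rw [eq_sum_mul_prod_of_recurrence (by simp [hD0const, iteratedDeriv_const]) step]
  refine sum_congr rfl fun k _ ↦ ?_
  rw [prod_div_distrib, prod_pow, mul_div_assoc]
end

section
/- For any positive integers with h_k | p_k, h̃_k | a_k, (h_k−1)(h̃_k−1)=0 for all k, defining S_l = Σ_{k=1}^l (1/12)(a_k²/h̃_k −1)(p_k²/h_k −1)·(p_{k+1}⋯p_l)²/(h_{k+1}⋯h_l), T_l = Σ_{k=1}^l (1/12)(a_k²−1)(p_k²−1)·(p_{k+1}⋯p_l)², and A_k = (h_k(h_k−1)/a_k²)·[(a_k²−1)/12 + T_{k-1}] + (h̃_k(h̃_k−1)/p_k²)·(p_k²−1)/12, one has the identity S_l = T_l − Σ_{k=1}^l (a_k² p_k²/(h̃_k² h_k²)) · (p_{k+1}²⋯p_l²/(h_{k+1}⋯h_l)) · A_k for every l ≥ 1. -/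
/-!
`S_l`, `T_l` and the correction sum are all of the form `Σ_{k=1}^l c_k r_{k+1} ⋯ r_l`, so each
satisfies a first-order recursion `F_{l+1} = F_l r_{l+1} + c_{l+1}`. Since `h_l = 1` or `h̃_l = 1`,
the three recursions are compatible with `S = T − C` (the step is a rational-function identity in
`a_l, p_l, h_l, h̃_l` and `T_{l-1}`), and the identity follows by induction from `l = 0`.
-/

open Finset

/-- `T_l = Σ_{k=1}^l (1/12)(a_k²−1)(p_k²−1)(p_{k+1}⋯p_l)²`,
the second derivative at 1 of `Δ(f_{(l)})♮`. -/
def Tq (p a : ℕ → ℕ) (l : ℕ) : ℚ :=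
  ∑ k ∈ Icc 1 l, (1 / 12 : ℚ) * ((a k : ℚ) ^ 2 - 1) * ((p k : ℚ) ^ 2 - 1)
    * (∏ j ∈ Icc (k + 1) l, (p j : ℚ)) ^ 2

/-- `S_l = Σ_{k=1}^l (1/12)(a_k²/h̃_k−1)(p_k²/h_k−1)(p_{k+1}⋯p_l)²/(h_{k+1}⋯h_l)`,
the second derivative at 1 of `Δ♮_{M_{(l)}}`. -/
def Sq (p a h ht : ℕ → ℕ) (l : ℕ) : ℚ :=
  ∑ k ∈ Icc 1 l, (1 / 12 : ℚ) * ((a k : ℚ) ^ 2 / (ht k : ℚ) - 1)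
    * ((p k : ℚ) ^ 2 / (h k : ℚ) - 1)
    * (∏ j ∈ Icc (k + 1) l, (p j : ℚ)) ^ 2 / (∏ j ∈ Icc (k + 1) l, (h j : ℚ))

/-- The correction term `A_k`. -/
def Aq (p a h ht : ℕ → ℕ) (k : ℕ) : ℚ :=
  ((h k : ℚ) * ((h k : ℚ) - 1) / (a k : ℚ) ^ 2)
      * (((a k : ℚ) ^ 2 - 1) / 12 + Tq p a (k - 1))
    + ((ht k : ℚ) * ((ht k : ℚ) - 1) / (p k : ℚ) ^ 2) * (((p k : ℚ) ^ 2 - 1) / 12)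

section TailSum

variable {R : Type*} [CommSemiring R]

def tailSum (c r : ℕ → R) (l : ℕ) : R :=
  ∑ k ∈ Icc 1 l, c k * ∏ j ∈ Icc (k + 1) l, r j

@[simp]
theorem tailSum_zero (c r : ℕ → R) : tailSum c r 0 = 0 := by
  simp [tailSum]

theorem tailSum_succ (c r : ℕ → R) (n : ℕ) :
    tailSum c r (n + 1) = tailSum c r n * r (n + 1) + c (n + 1) := by
  rw [tailSum, tailSum, sum_Icc_succ_top (by omega), sum_mul,
    Icc_eq_empty_of_lt (Nat.lt_succ_self _), prod_empty, mul_one]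
  congr 1
  refine sum_congr rfl fun k hk => ?_
  rw [prod_Icc_succ_top (by have := (mem_Icc.mp hk).2; omega), mul_assoc]

end TailSum

theorem Tq_eq_tailSum (p a : ℕ → ℕ) (l : ℕ) :
    Tq p a l = tailSum (fun k => (1 / 12 : ℚ) * ((a k : ℚ) ^ 2 - 1) * ((p k : ℚ) ^ 2 - 1))
      (fun j => (p j : ℚ) ^ 2) l := by
  simp only [Tq, tailSum, prod_pow]

theorem Sq_eq_tailSum (p a h ht : ℕ → ℕ) (l : ℕ) :
    Sq p a h ht l = tailSum
      (fun k => (1 / 12 : ℚ) * ((a k : ℚ) ^ 2 / (ht k : ℚ) - 1) * ((p k : ℚ) ^ 2 / (h k : ℚ) - 1))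
      (fun j => (p j : ℚ) ^ 2 / (h j : ℚ)) l := by
  simp only [Sq, tailSum, prod_div_distrib, prod_pow, mul_div_assoc]

theorem correction_sum_eq_tailSum (p a h ht : ℕ → ℕ) (l : ℕ) :
    ∑ k ∈ Icc 1 l,
        ((a k : ℚ) ^ 2 * (p k : ℚ) ^ 2 / ((ht k : ℚ) ^ 2 * (h k : ℚ) ^ 2))
          * ((∏ j ∈ Icc (k + 1) l, (p j : ℚ)) ^ 2 / (∏ j ∈ Icc (k + 1) l, (h j : ℚ)))
          * Aq p a h ht k
      = tailSum
          (fun k => (a k : ℚ) ^ 2 * (p k : ℚ) ^ 2 / ((ht k : ℚ) ^ 2 * (h k : ℚ) ^ 2)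
            * Aq p a h ht k)
          (fun j => (p j : ℚ) ^ 2 / (h j : ℚ)) l := by
  simp only [tailSum, prod_div_distrib, prod_pow, mul_right_comm]

theorem correction_recursion_step {K : Type*} [Field K] {a p h ht : K} (t : K)
    (ha : a ≠ 0) (hp : p ≠ 0) (hh : h ≠ 0) (hht : ht ≠ 0) (hone : h = 1 ∨ ht = 1) :
    t * (p ^ 2 / h) + 1 / 12 * (a ^ 2 / ht - 1) * (p ^ 2 / h - 1)
      = t * p ^ 2 + 1 / 12 * (a ^ 2 - 1) * (p ^ 2 - 1)
        - a ^ 2 * p ^ 2 / (ht ^ 2 * h ^ 2)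
          * (h * (h - 1) / a ^ 2 * ((a ^ 2 - 1) / 12 + t)
            + ht * (ht - 1) / p ^ 2 * ((p ^ 2 - 1) / 12)) := by
  rcases hone with rfl | rfl <;> field_simp <;> ring

theorem cast_eq_one_or_cast_eq_one {R : Type*} [AddMonoidWithOne R] [CharZero R] {m n : ℕ}
    (hm : 0 < m) (hn : 0 < n) (hmn : (m - 1) * (n - 1) = 0) : (m : R) = 1 ∨ (n : R) = 1 := by
  rcases Nat.mul_eq_zero.mp hmn with h | h <;> [left; right] <;> norm_cast <;> omega

theorem S_eq_T_sub_correction_general (p a h ht : ℕ → ℕ)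
    (hp : ∀ k, 0 < p k) (ha : ∀ k, 0 < a k) (hh : ∀ k, 0 < h k) (hht : ∀ k, 0 < ht k)
    (hone : ∀ k, (h k - 1) * (ht k - 1) = 0) :
    ∀ l : ℕ, 1 ≤ l →
      Sq p a h ht l
        = Tq p a l - ∑ k ∈ Icc 1 l,
            ((a k : ℚ) ^ 2 * (p k : ℚ) ^ 2 / ((ht k : ℚ) ^ 2 * (h k : ℚ) ^ 2))
              * ((∏ j ∈ Icc (k + 1) l, (p j : ℚ)) ^ 2
                / (∏ j ∈ Icc (k + 1) l, (h j : ℚ)))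
              * Aq p a h ht k := by
  rintro l -
  rw [Sq_eq_tailSum, Tq_eq_tailSum, correction_sum_eq_tailSum]
  induction l with
  | zero => simp
  | succ n ih =>
    rw [tailSum_succ, tailSum_succ, tailSum_succ, ih, Aq, Nat.add_sub_cancel, Tq_eq_tailSum]
    have cast_ne_zero {m : ℕ} (hm : 0 < m) : (m : ℚ) ≠ 0 := Nat.cast_ne_zero.mpr hm.ne'
    linear_combination correction_recursion_step (tailSum _ _ n) (cast_ne_zero (ha _))
      (cast_ne_zero (hp _)) (cast_ne_zero (hh _)) (cast_ne_zero (hht _))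
      (cast_eq_one_or_cast_eq_one (hh _) (hht _) (hone _))

/-- Identity 6.2(k): `S_l = T_l − Σ_{k=1}^l (a_k²p_k²/(h̃_k²h_k²))·
(p_{k+1}²⋯p_l²/(h_{k+1}⋯h_l))·A_k`. -/
theorem S_eq_T_sub_correction (p a h ht : ℕ → ℕ)
    (hp : ∀ k, 0 < p k) (ha : ∀ k, 0 < a k) (hh : ∀ k, 0 < h k) (hht : ∀ k, 0 < ht k)
    (hdvd : ∀ k, h k ∣ p k) (hdvd' : ∀ k, ht k ∣ a k)
    (hone : ∀ k, (h k - 1) * (ht k - 1) = 0) :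
    ∀ l : ℕ, 1 ≤ l →
      Sq p a h ht l
        = Tq p a l - ∑ k ∈ Icc 1 l,
            ((a k : ℚ) ^ 2 * (p k : ℚ) ^ 2 / ((ht k : ℚ) ^ 2 * (h k : ℚ) ^ 2))
              * ((∏ j ∈ Icc (k + 1) l, (p j : ℚ)) ^ 2
                / (∏ j ∈ Icc (k + 1) l, (h j : ℚ)))
              * Aq p a h ht k :=
  S_eq_T_sub_correction_general p a h ht hp ha hh hht hone
end
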